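/- arXiv:2503.21052 — 9 statements merged into one kernel-verified Lean document; each statement's English description precedes it below -/
import Mathlib

section
/- If G is a disperse ℓ-uniform hypergraph (ℓ ≥ 3), then for every vertex v of G, the link L(v) is a disperse (ℓ−1)-uniform hypergraph. -/
open Finset

/-- An `ℓ`-uniform hypergraph (given by its edge set `E`) is disperse if every
`(ℓ+1)`-set of vertices induces `0`, `1`, `ℓ` or `ℓ+1` edges. -/
def Disperse {V : Type*} [DecidableEq V] (ℓ : ℕ) (E : Finset (Finset V)) : Prop :=
  ∀ X : Finset V, X.card = ℓ + 1 →
    (E.filter (· ⊆ X)).card = 0 ∨ (E.filter (· ⊆ X)).card = 1 ∨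
    (E.filter (· ⊆ X)).card = ℓ ∨ (E.filter (· ⊆ X)).card = ℓ + 1

/-- Edge set of the link of a vertex `v`: all `(ℓ-1)`-sets `e` with `e ∪ {v} ∈ E`. -/
def linkEdges {V : Type*} [DecidableEq V] (E : Finset (Finset V)) (v : V) :
    Finset (Finset V) :=
  (E.filter (fun e => v ∈ e)).image (fun e => e.erase v)

/-- `A` and `B` are connected by a tight walk in the `k`-uniform hypergraph with
edge set `E`: there is a sequence of edges, consecutive ones sharing at least
`k - 1` vertices, whose first edge contains `A` and last edge contains `B`. -/
def TightConn {V : Type*} [DecidableEq V] (k : ℕ) (E : Finset (Finset V))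
    (A B : Finset V) : Prop :=
  ∃ es : List (Finset V), ∃ h : es ≠ [],
    (∀ e ∈ es, e ∈ E) ∧ es.Chain' (fun a b => k - 1 ≤ (a ∩ b).card) ∧
    A ⊆ es.head h ∧ B ⊆ es.getLast h

/-- links of a disperse hypergraph are disperse. -/
theorem links_of_disperse_are_disperse {V : Type*} [DecidableEq V] (ℓ : ℕ) (hℓ : 3 ≤ ℓ)
    (E : Finset (Finset V)) (hunif : ∀ e ∈ E, e.card = ℓ) (hdisp : Disperse ℓ E)
    (v : V) : Disperse (ℓ - 1) (linkEdges E v) := by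
  intro X hX
  have hℓ1 : ℓ - 1 + 1 = ℓ := by omega
  rw [hℓ1] at hX
  have hlink : ∀ e ∈ linkEdges E v, e.card = ℓ - 1 ∧ v ∉ e ∧ insert v e ∈ E := by
    intro e he
    simp only [linkEdges, mem_image, mem_filter] at he
    obtain ⟨f, ⟨hfE, hvf⟩, rfl⟩ := he
    refine ⟨by rw [card_erase_of_mem hvf, hunif f hfE], notMem_erase v f, ?_⟩
    rwa [insert_erase hvf]
  by_cases hvX : v ∈ X
  · -- at most one link edge fits inside X
    have hsub : (linkEdges E v).filter (· ⊆ X) ⊆ {X.erase v} := by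
      intro e he
      rw [mem_filter] at he
      obtain ⟨he1, he2⟩ := he
      obtain ⟨hc, hv, _⟩ := hlink e he1
      rw [mem_singleton]
      apply eq_of_subset_of_card_le
      · intro x hx
        exact mem_erase.2 ⟨fun h => hv (h ▸ hx), he2 hx⟩
      · rw [card_erase_of_mem hvX, hX, hc]
    have := card_le_card hsub
    rw [card_singleton] at this
    omega
  · set Y := insert v X with hY
    have hYcard : Y.card = ℓ + 1 := by rw [hY, card_insert_of_notMem hvX, hX]
    set S := (linkEdges E v).filter (· ⊆ X) with hS
    set W := E.filter (· ⊆ Y) with hW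
    set T := W.filter (fun f => v ∈ f) with hT
    set T' := W.filter (fun f => v ∉ f) with hT'
    have hST : S = T.image (fun f => f.erase v) := by
      ext e
      constructor
      · intro he
        rw [hS, mem_filter] at he
        obtain ⟨he1, he2⟩ := he
        simp only [linkEdges, mem_image, mem_filter] at he1
        obtain ⟨f, ⟨hfE, hvf⟩, rfl⟩ := he1
        refine mem_image.2 ⟨f, ?_, rfl⟩
        rw [hT, mem_filter, hW, mem_filter]
        refine ⟨⟨hfE, ?_⟩, hvf⟩
        intro x hx
        rcases eq_or_ne x v with rfl | hxv
        · exact mem_insert_self _ _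
        · exact mem_insert_of_mem (he2 (mem_erase.2 ⟨hxv, hx⟩))
      · intro he
        obtain ⟨f, hf, rfl⟩ := mem_image.1 he
        rw [hT, mem_filter, hW, mem_filter] at hf
        obtain ⟨⟨hfE, hfY⟩, hvf⟩ := hf
        rw [hS, mem_filter]
        constructor
        · simp only [linkEdges, mem_image, mem_filter]
          exact ⟨f, ⟨hfE, hvf⟩, rfl⟩
        · intro x hx
          rw [mem_erase] at hx
          rcases mem_insert.1 (hfY hx.2) with h | h
          · exact absurd h hx.1
          · exact h
    have hcST : S.card = T.card := by
      rw [hST]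
      apply card_image_of_injOn
      intro a ha b hb hab
      rw [mem_coe, hT, mem_filter] at ha hb
      have hab' : a.erase v = b.erase v := hab
      have : insert v (a.erase v) = insert v (b.erase v) := by rw [hab']
      rwa [insert_erase ha.2, insert_erase hb.2] at this
    have hsplit : T.card + T'.card = W.card :=
      card_filter_add_card_filter_not (fun f => v ∈ f)
    have hT'le : T'.card ≤ 1 := by
      have : T' ⊆ {X} := by
        intro f hf
        rw [hT', hW, mem_filter, mem_filter] at hf
        obtain ⟨⟨hfE, hfY⟩, hvf⟩ := hf
        rw [mem_singleton]
        have hfX : f ⊆ X := by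
          intro x hx
          rcases mem_insert.1 (hfY hx) with h | h
          · exact absurd (h ▸ hx) hvf
          · exact h
        apply eq_of_subset_of_card_le hfX
        rw [hX, hunif f hfE]
      have := card_le_card this
      rwa [card_singleton] at this
    have hSle : S.card ≤ ℓ := by
      have : S ⊆ X.powersetCard (ℓ - 1) := by
        intro e he
        rw [hS, mem_filter] at he
        exact mem_powersetCard.2 ⟨he.2, (hlink e he.1).1⟩
      have h2 := card_le_card this
      rwa [card_powersetCard, hX, Nat.choose_symm (by omega : 1 ≤ ℓ),
        Nat.choose_one_right] at h2
    have hm := hdisp Y hYcard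
    rw [← hW] at hm
    rcases hm with h | h | h | h <;> omega
end

section
/- Let G be a disperse ℓ-uniform hypergraph (ℓ ≥ 3), let f, g ∈ E(G) with |f ∩ g| ≥ ℓ−1, let v ∈ f, and let A, B ⊆ g∖{v} with |A| = |B| = ℓ−2. Then there exist edges e₁, e₂ of the link L(v) with A ⊆ e₁, B ⊆ e₂, and |e₁ ∩ e₂| ≥ ℓ−2 (i.e., A and B are connected by a tight walk of length at most 2 in L(v)). -/
open Finset

lemma mem_linkEdges_of {V : Type*} [DecidableEq V] {E : Finset (Finset V)} {v : V}
    {x : Finset V} (hx : x ∈ E) (hvx : v ∈ x) : x.erase v ∈ linkEdges E v := by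
  simp only [linkEdges, Finset.mem_image, Finset.mem_filter]
  exact ⟨x, ⟨hx, hvx⟩, rfl⟩

theorem two_edge_tight_walk_in_link {V : Type*} [DecidableEq V] (ℓ : ℕ) (hℓ : 3 ≤ ℓ)
    (E : Finset (Finset V)) (hunif : ∀ e ∈ E, e.card = ℓ) (hdisp : Disperse ℓ E)
    (f g : Finset V) (hf : f ∈ E) (hg : g ∈ E) (hfg : ℓ - 1 ≤ (f ∩ g).card)
    (v : V) (hv : v ∈ f) (A B : Finset V) (hA : A ⊆ g.erase v) (hB : B ⊆ g.erase v)
    (hAcard : A.card = ℓ - 2) (hBcard : B.card = ℓ - 2) :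
    ∃ e₁ ∈ linkEdges E v, ∃ e₂ ∈ linkEdges E v,
      A ⊆ e₁ ∧ B ⊆ e₂ ∧ ℓ - 2 ≤ (e₁ ∩ e₂).card := by
  have hgc := hunif g hg
  by_cases hvg : v ∈ g
  · refine ⟨g.erase v, mem_linkEdges_of hg hvg, g.erase v, mem_linkEdges_of hg hvg,
      hA, hB, ?_⟩
    rw [Finset.inter_self, Finset.card_erase_of_mem hvg, hgc]
    omega
  · have hgA : A ⊆ g := hA.trans (Finset.erase_subset _ _)
    have hgB : B ⊆ g := hB.trans (Finset.erase_subset _ _)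
    have hfc := hunif f hf
    have hfg' : f ∩ g ⊆ f.erase v := by
      intro x hx
      rw [Finset.mem_inter] at hx
      exact Finset.mem_erase.mpr ⟨fun h => hvg (h ▸ hx.2), hx.1⟩
    have h1 : (f.erase v).card = ℓ - 1 := by rw [Finset.card_erase_of_mem hv, hfc]
    have heq : f ∩ g = f.erase v :=
      Finset.eq_of_subset_of_card_le hfg' (by rw [h1]; exact hfg)
    have hXcard : (insert v g).card = ℓ + 1 := by
      rw [Finset.card_insert_of_notMem hvg, hgc]
    have hfX : f ⊆ insert v g := by
      intro x hx
      rcases eq_or_ne x v with rfl | hxv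
      · exact Finset.mem_insert_self _ _
      · have hx' : x ∈ f ∩ g := heq ▸ Finset.mem_erase.mpr ⟨hxv, hx⟩
        exact Finset.mem_insert_of_mem (Finset.mem_of_mem_inter_right hx')
    have hfF : f ∈ E.filter (· ⊆ insert v g) := Finset.mem_filter.mpr ⟨hf, hfX⟩
    have hgF : g ∈ E.filter (· ⊆ insert v g) :=
      Finset.mem_filter.mpr ⟨hg, Finset.subset_insert _ _⟩
    have hne : f ≠ g := fun h => hvg (h ▸ hv)
    have h2 : 2 ≤ (E.filter (· ⊆ insert v g)).card :=
      Finset.one_lt_card.mpr ⟨f, hfF, g, hgF, hne⟩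
    have hFcard : ℓ ≤ (E.filter (· ⊆ insert v g)).card := by
      rcases hdisp (insert v g) hXcard with h | h | h | h <;> omega
    have hsub : (E.filter (· ⊆ insert v g)).filter (fun e => v ∉ e) ⊆ {g} := by
      intro e he
      simp only [Finset.mem_filter, Finset.mem_singleton] at he ⊢
      obtain ⟨⟨heE, heX⟩, hve⟩ := he
      have hesub : e ⊆ g := by
        intro x hx
        rcases Finset.mem_insert.mp (heX hx) with rfl | h
        · exact absurd hx hve
        · exact h
      exact Finset.eq_of_subset_of_card_le hesub (le_of_eq (by rw [hunif e heE, hgc]))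
    have hsplit := Finset.card_filter_add_card_filter_not
      (s := E.filter (· ⊆ insert v g)) (p := fun e => v ∈ e)
    have hle1 : ((E.filter (· ⊆ insert v g)).filter (fun e => v ∉ e)).card ≤ 1 := by
      have := Finset.card_le_card hsub
      simpa using this
    have hmany : ℓ - 1 ≤ ((E.filter (· ⊆ insert v g)).filter (fun e => v ∈ e)).card := by
      omega
    set S := ((E.filter (· ⊆ insert v g)).filter (fun e => v ∈ e)).image
      (fun e => e.erase v) with hS
    have hScard : ℓ - 1 ≤ S.card := by
      rw [hS, Finset.card_image_of_injOn]
      · exact hmany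
      · intro a ha b hb hab
        simp only [Finset.mem_coe, Finset.mem_filter] at ha hb
        rw [← Finset.insert_erase ha.2, ← Finset.insert_erase hb.2]
        exact congrArg (insert v) hab
    have hSsub : S ⊆ g.powersetCard (ℓ - 1) := by
      intro e he
      rw [hS, Finset.mem_image] at he
      obtain ⟨x, hx, rfl⟩ := he
      simp only [Finset.mem_filter] at hx
      rw [Finset.mem_powersetCard]
      constructor
      · intro y hy
        have hyX := hx.1.2 (Finset.mem_of_mem_erase hy)
        rcases Finset.mem_insert.mp hyX with rfl | h
        · exact absurd rfl (Finset.ne_of_mem_erase hy)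
        · exact h
      · rw [Finset.card_erase_of_mem hx.2, hunif _ hx.1.1]
    have hSlink : S ⊆ linkEdges E v := by
      intro e he
      rw [hS, Finset.mem_image] at he
      obtain ⟨x, hx, rfl⟩ := he
      simp only [Finset.mem_filter] at hx
      exact mem_linkEdges_of hx.1.1 hx.2
    have hP : (g.powersetCard (ℓ - 1)).card = ℓ := by
      rw [Finset.card_powersetCard, hgc, Nat.choose_symm (by omega : 1 ≤ ℓ),
        Nat.choose_one_right]
    have key : ∀ C, C ⊆ g → C.card = ℓ - 2 → ∃ e ∈ S, C ⊆ e := by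
      intro C hCg hCc
      by_contra hcon
      push_neg at hcon
      have hS' : S ⊆ (g.powersetCard (ℓ - 1)).filter (fun e => ¬ C ⊆ e) :=
        fun e he => Finset.mem_filter.mpr ⟨hSsub he, hcon e he⟩
      have hdiff : (g \ C).card = 2 := by
        rw [Finset.card_sdiff_of_subset hCg, hgc, hCc]; omega
      obtain ⟨x, y, hxy, hxyC⟩ := Finset.card_eq_two.mp hdiff
      have hx : x ∈ g \ C := by rw [hxyC]; simp
      have hy : y ∈ g \ C := by rw [hxyC]; simp
      have hx1 := Finset.mem_sdiff.mp hx
      have hy1 := Finset.mem_sdiff.mp hy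
      have he1 : g.erase x ∈ (g.powersetCard (ℓ - 1)).filter (fun e => C ⊆ e) := by
        rw [Finset.mem_filter, Finset.mem_powersetCard]
        refine ⟨⟨Finset.erase_subset _ _, ?_⟩, ?_⟩
        · rw [Finset.card_erase_of_mem hx1.1, hgc]
        · intro z hz; exact Finset.mem_erase.mpr ⟨fun h => hx1.2 (h ▸ hz), hCg hz⟩
      have he2 : g.erase y ∈ (g.powersetCard (ℓ - 1)).filter (fun e => C ⊆ e) := by
        rw [Finset.mem_filter, Finset.mem_powersetCard]
        refine ⟨⟨Finset.erase_subset _ _, ?_⟩, ?_⟩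
        · rw [Finset.card_erase_of_mem hy1.1, hgc]
        · intro z hz; exact Finset.mem_erase.mpr ⟨fun h => hy1.2 (h ▸ hz), hCg hz⟩
      have hne2 : g.erase x ≠ g.erase y := fun h => by
        have hyx : y ∈ g.erase x := Finset.mem_erase.mpr ⟨hxy.symm, hy1.1⟩
        rw [h] at hyx
        exact (Finset.mem_erase.mp hyx).1 rfl
      have h2' : 2 ≤ ((g.powersetCard (ℓ - 1)).filter (fun e => C ⊆ e)).card :=
        Finset.one_lt_card.mpr ⟨_, he1, _, he2, hne2⟩
      have hsplit2 := Finset.card_filter_add_card_filter_not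
        (s := g.powersetCard (ℓ - 1)) (p := fun e => C ⊆ e)
      have hSle := Finset.card_le_card hS'
      omega
    obtain ⟨e₁, he₁S, hAe₁⟩ := key A hgA hAcard
    obtain ⟨e₂, he₂S, hBe₂⟩ := key B hgB hBcard
    refine ⟨e₁, hSlink he₁S, e₂, hSlink he₂S, hAe₁, hBe₂, ?_⟩
    have h1' := Finset.mem_powersetCard.mp (hSsub he₁S)
    have h2' := Finset.mem_powersetCard.mp (hSsub he₂S)
    have hu : (e₁ ∪ e₂).card ≤ ℓ := by
      rw [← hgc]; exact Finset.card_le_card (Finset.union_subset h1'.1 h2'.1)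
    have := Finset.card_union_add_card_inter e₁ e₂
    omega
end

section
/- Let G be a disperse ℓ-uniform hypergraph (ℓ ≥ 3), let e, f, g be a tight walk in G (i.e., e,f,g ∈ E(G) with |e∩f| ≥ ℓ−1 and |f∩g| ≥ ℓ−1), let v ∈ e, and let B ⊆ g with |B| = ℓ−1. Then there exist edges f', g' ∈ E(G) with |f' ∩ g'| ≥ ℓ−1, v ∈ f', and B ⊆ g'. -/
open Finset

lemma key_lemma {V : Type*} [DecidableEq V] {ℓ : ℕ}
    {E : Finset (Finset V)} (hunif : ∀ e' ∈ E, e'.card = ℓ) (hdisp : Disperse ℓ E)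
    {X : Finset V} (hX : X.card = ℓ + 1)
    {e1 e2 s t : Finset V} (he1 : e1 ∈ E) (he2 : e2 ∈ E) (h1X : e1 ⊆ X) (h2X : e2 ⊆ X)
    (h12 : e1 ≠ e2) (hs : s ⊆ X) (ht : t ⊆ X) (hsc : s.card = ℓ) (htc : t.card = ℓ)
    (hst : s ≠ t) : s ∈ E ∨ t ∈ E := by
  by_contra hcon
  push_neg at hcon
  obtain ⟨hsE, htE⟩ := hcon
  set F := E.filter (· ⊆ X) with hF
  have h1F : e1 ∈ F := mem_filter.mpr ⟨he1, h1X⟩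
  have h2F : e2 ∈ F := mem_filter.mpr ⟨he2, h2X⟩
  have h2le : 2 ≤ F.card := by
    have hsub : ({e1, e2} : Finset (Finset V)) ⊆ F := by
      intro u hu
      rcases mem_insert.mp hu with rfl | hu
      · exact h1F
      · rw [mem_singleton.mp hu]; exact h2F
    have hc2 : ({e1, e2} : Finset (Finset V)).card = 2 := by
      rw [card_insert_of_notMem (by simpa using h12), card_singleton]
    calc 2 = ({e1, e2} : Finset (Finset V)).card := hc2.symm
      _ ≤ F.card := card_le_card hsub
  have htF : t ∉ F := fun h => htE (mem_filter.mp h).1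
  have hsF : s ∉ insert t F := by
    intro h
    rcases mem_insert.mp h with h | h
    · exact hst h
    · exact hsE (mem_filter.mp h).1
  have hsubset : insert s (insert t F) ⊆ X.powersetCard ℓ := by
    intro u hu
    rw [mem_powersetCard]
    rcases mem_insert.mp hu with rfl | hu
    · exact ⟨hs, hsc⟩
    rcases mem_insert.mp hu with rfl | hu
    · exact ⟨ht, htc⟩
    · obtain ⟨huE, huX⟩ := mem_filter.mp hu
      exact ⟨huX, hunif _ huE⟩
  have hcard : (insert s (insert t F)).card = F.card + 2 := by
    rw [card_insert_of_notMem hsF, card_insert_of_notMem htF]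
  have hle := card_le_card hsubset
  rw [hcard, card_powersetCard, hX, Nat.choose_succ_self_right] at hle
  rcases hdisp X hX with h | h | h | h <;> rw [← hF] at h <;> omega

theorem shorten_tight_walk {V : Type*} [DecidableEq V] (ℓ : ℕ) (hℓ : 3 ≤ ℓ)
    (E : Finset (Finset V)) (hunif : ∀ e' ∈ E, e'.card = ℓ) (hdisp : Disperse ℓ E)
    (e f g : Finset V) (he : e ∈ E) (hf : f ∈ E) (hg : g ∈ E)
    (hef : ℓ - 1 ≤ (e ∩ f).card) (hfg : ℓ - 1 ≤ (f ∩ g).card)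
    (v : V) (hv : v ∈ e) (B : Finset V) (hB : B ⊆ g) (hBcard : B.card = ℓ - 1) :
    ∃ f' ∈ E, ∃ g' ∈ E, ℓ - 1 ≤ (f' ∩ g').card ∧ v ∈ f' ∧ B ⊆ g' := by
  by_cases hvf : v ∈ f
  · exact ⟨f, hf, g, hg, hfg, hvf, hB⟩
  by_cases hBf : B ⊆ f
  · exact ⟨e, he, f, hf, hef, hv, hBf⟩
  by_cases hvg : v ∈ g
  · exact ⟨g, hg, g, hg, by rw [inter_self, hunif g hg]; omega, hvg, hB⟩
  have hec : e.card = ℓ := hunif e he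
  have hfc : f.card = ℓ := hunif f hf
  have hgc : g.card = ℓ := hunif g hg
  have hfgne : f ≠ g := fun h => hBf (h ▸ hB)
  -- |f ∩ g| = ℓ - 1
  have hWc : (f ∩ g).card = ℓ - 1 := by
    have hne : f ∩ g ≠ f := by
      intro h
      have hsub : f ⊆ g := by rw [← h]; exact inter_subset_right
      exact hfgne (eq_of_subset_of_card_le hsub (by omega))
    have hlt : (f ∩ g).card < ℓ := by
      have := card_lt_card (ssubset_of_subset_of_ne inter_subset_left hne)
      omega
    omega
  -- e ⊆ insert v f
  have hevf : e ∩ f = e.erase v := by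
    apply eq_of_subset_of_card_le
    · intro x hx
      exact mem_erase.mpr ⟨fun h => hvf (h ▸ (mem_inter.mp hx).2), (mem_inter.mp hx).1⟩
    · rw [card_erase_of_mem hv]; omega
  have heX : e ⊆ insert v f := by
    intro x hx
    by_cases hxv : x = v
    · exact hxv ▸ mem_insert_self v f
    · have : x ∈ e ∩ f := by rw [hevf]; exact mem_erase.mpr ⟨hxv, hx⟩
      exact mem_insert_of_mem (mem_inter.mp this).2
  have hefne : e ≠ f := fun h => hvf (h ▸ hv)
  -- a, b
  have hfg1 : (f \ g).card = 1 := by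
    have := card_inter_add_card_sdiff f g
    omega
  obtain ⟨a, ha⟩ := card_eq_one.mp hfg1
  have hgf1 : (g \ f).card = 1 := by
    have := card_inter_add_card_sdiff g f
    rw [inter_comm] at this
    omega
  obtain ⟨b, hb⟩ := card_eq_one.mp hgf1
  have hamem : a ∈ f \ g := by rw [ha]; exact mem_singleton_self a
  have haf : a ∈ f := (mem_sdiff.mp hamem).1
  have hag : a ∉ g := (mem_sdiff.mp hamem).2
  have hbmem : b ∈ g \ f := by rw [hb]; exact mem_singleton_self b
  have hbg : b ∈ g := (mem_sdiff.mp hbmem).1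
  have hbf : b ∉ f := (mem_sdiff.mp hbmem).2
  -- b ∈ B
  obtain ⟨u, huB, huf⟩ := not_subset.mp hBf
  have hbB : b ∈ B := by
    have : u ∈ g \ f := mem_sdiff.mpr ⟨hB huB, huf⟩
    rw [hb] at this
    exact (mem_singleton.mp this) ▸ huB
  -- w'
  obtain ⟨w', hw'W, hw'B⟩ : ∃ w' ∈ f ∩ g, w' ∉ B := by
    by_contra hcon
    push_neg at hcon
    have heq : f ∩ g = B := eq_of_subset_of_card_le hcon (by omega)
    exact hbf (mem_inter.mp (heq ▸ hbB)).1
  have hw'f : w' ∈ f := (mem_inter.mp hw'W).1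
  have hw'g : w' ∈ g := (mem_inter.mp hw'W).2
  have haw' : a ≠ w' := fun h => hag (h ▸ hw'g)
  have hva : v ≠ a := fun h => hvf (h ▸ haf)
  have hvb : v ≠ b := fun h => hvg (h ▸ hbg)
  have hXc : (insert v f).card = ℓ + 1 := by rw [card_insert_of_notMem hvf, hfc]
  have hvY : v ∉ f ∪ g := by
    rw [mem_union]; rintro (h | h) <;> [exact hvf h; exact hvg h]
  have hYc : (f ∪ g).card = ℓ + 1 := by
    have := card_inter_add_card_union f g
    omega
  -- "y ∈ f ∪ g, y ≠ a implies y ∈ g"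
  have hfa : ∀ y ∈ f ∪ g, y ≠ a → y ∈ g := by
    intro y hy hya
    rcases mem_union.mp hy with h | h
    · by_contra hyg
      have : y ∈ f \ g := mem_sdiff.mpr ⟨h, hyg⟩
      rw [ha] at this
      exact hya (mem_singleton.mp this)
    · exact h
  -- Case 1: some edge inside insert v g contains v
  by_cases hZE : ∃ s ∈ E, s ⊆ insert v g ∧ v ∈ s
  · obtain ⟨f', hf'E, hf'Z, hvf'⟩ := hZE
    have h1 : f'.erase v ⊆ f' ∩ g := by
      intro x hx
      have hxf' := mem_of_mem_erase hx
      rcases mem_insert.mp (hf'Z hxf') with h | h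
      · exact absurd h (ne_of_mem_erase hx)
      · exact mem_inter.mpr ⟨hxf', h⟩
    have hcard : ℓ - 1 ≤ (f' ∩ g).card := by
      have := card_le_card h1
      rw [card_erase_of_mem hvf', hunif f' hf'E] at this
      omega
    exact ⟨f', hf'E, g, hg, hcard, hvf', hB⟩
  push_neg at hZE
  have hWvE : insert v (f ∩ g) ∉ E := by
    intro h
    refine hZE _ h ?_ (mem_insert_self v _)
    intro x hx
    rcases mem_insert.mp hx with rfl | hx
    · exact mem_insert_self x g
    · exact mem_insert_of_mem (mem_inter.mp hx).2
  have hvW : v ∉ f ∩ g := fun h => hvf (mem_inter.mp h).1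
  have htWc : (insert v (f ∩ g)).card = ℓ := by
    rw [card_insert_of_notMem hvW, hWc]; omega
  have htWX : insert v (f ∩ g) ⊆ insert v f := insert_subset_insert _ inter_subset_left
  -- any X.erase u (u ∈ f ∩ g) is an edge
  have hXedge : ∀ u ∈ f ∩ g, (insert v f).erase u ∈ E := by
    intro u huW
    have huf : u ∈ f := (mem_inter.mp huW).1
    have hsX : (insert v f).erase u ⊆ insert v f := erase_subset _ _
    have hsc : ((insert v f).erase u).card = ℓ := by
      rw [card_erase_of_mem (mem_insert_of_mem huf), hXc]; omega
    have hau : a ≠ u := fun h => hag (h ▸ (mem_inter.mp huW).2)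
    have hst : (insert v f).erase u ≠ insert v (f ∩ g) := by
      intro h
      have haX : a ∈ (insert v f).erase u :=
        mem_erase.mpr ⟨hau, mem_insert_of_mem haf⟩
      rw [h] at haX
      rcases mem_insert.mp haX with h' | h'
      · exact hva h'.symm
      · exact hag (mem_inter.mp h').2
    rcases key_lemma hunif hdisp hXc he hf heX (subset_insert _ _) hefne hsX htWX hsc htWc hst
      with h | h
    · exact h
    · exact absurd h hWvE
  -- Case split on whether (f ∪ g).erase w' is an edge
  by_cases hYw' : (f ∪ g).erase w' ∈ E
  · refine ⟨(insert v f).erase w', hXedge w' hw'W, (f ∪ g).erase w', hYw', ?_, ?_, ?_⟩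
    · -- intersection bound
      have hsub : insert a ((f ∩ g).erase w') ⊆
          ((insert v f).erase w') ∩ ((f ∪ g).erase w') := by
        intro x hx
        rcases mem_insert.mp hx with rfl | hx
        · exact mem_inter.mpr ⟨mem_erase.mpr ⟨haw', mem_insert_of_mem haf⟩,
            mem_erase.mpr ⟨haw', mem_union_left _ haf⟩⟩
        · have hxw' := ne_of_mem_erase hx
          have hxf : x ∈ f := (mem_inter.mp (mem_of_mem_erase hx)).1
          exact mem_inter.mpr ⟨mem_erase.mpr ⟨hxw', mem_insert_of_mem hxf⟩,
            mem_erase.mpr ⟨hxw', mem_union_left _ hxf⟩⟩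
      have hc : (insert a ((f ∩ g).erase w')).card = ℓ - 1 := by
        rw [card_insert_of_notMem (fun h => hag (mem_inter.mp (mem_of_mem_erase h)).2),
          card_erase_of_mem hw'W, hWc]
        omega
      have := card_le_card hsub
      omega
    · exact mem_erase.mpr ⟨fun h => hvf (h ▸ hw'f), mem_insert_self v f⟩
    · intro x hx
      exact mem_erase.mpr ⟨fun h => hw'B (h ▸ hx), mem_union_right _ (hB hx)⟩
  · -- Contradiction case
    exfalso
    -- pick x ∈ (f ∩ g).erase w'
    have hpos : 0 < ((f ∩ g).erase w').card := by
      rw [card_erase_of_mem hw'W, hWc]; omega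
    obtain ⟨x, hx⟩ := card_pos.mp hpos
    have hxW : x ∈ f ∩ g := mem_of_mem_erase hx
    have hxw' : x ≠ w' := ne_of_mem_erase hx
    have hxf : x ∈ f := (mem_inter.mp hxW).1
    have hxg : x ∈ g := (mem_inter.mp hxW).2
    have hvx : v ≠ x := fun h => hvf (h ▸ hxf)
    have hbx : b ≠ x := fun h => hbf (h ▸ hxf)
    have hbw' : b ≠ w' := fun h => hbf (h ▸ hw'f)
    -- (f ∪ g).erase x ∈ E
    have hYx : (f ∪ g).erase x ∈ E := by
      have hcx : ((f ∪ g).erase x).card = ℓ := by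
        rw [card_erase_of_mem (mem_union_left _ hxf), hYc]; omega
      have hcw' : ((f ∪ g).erase w').card = ℓ := by
        rw [card_erase_of_mem (mem_union_left _ hw'f), hYc]; omega
      have hst : (f ∪ g).erase x ≠ (f ∪ g).erase w' := by
        intro h
        have : w' ∈ (f ∪ g).erase x := mem_erase.mpr ⟨fun h' => hxw' h'.symm, mem_union_left _ hw'f⟩
        rw [h] at this
        exact (ne_of_mem_erase this) rfl
      rcases key_lemma hunif hdisp hYc hf hg subset_union_left subset_union_right hfgne
        (erase_subset _ _) (erase_subset _ _) hcx hcw' hst with h | h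
      · exact h
      · exact absurd h hYw'
    have hXx : (insert v f).erase x ∈ E := hXedge x hxW
    -- S' := insert v ((f ∪ g).erase x)
    set S' : Finset V := insert v ((f ∪ g).erase x) with hS'
    have hvYx : v ∉ (f ∪ g).erase x := fun h => hvY (mem_of_mem_erase h)
    have hS'c : S'.card = ℓ + 1 := by
      rw [hS', card_insert_of_notMem hvYx, card_erase_of_mem (mem_union_left _ hxf), hYc]
      omega
    have hYxS' : (f ∪ g).erase x ⊆ S' := subset_insert _ _
    have hXxS' : (insert v f).erase x ⊆ S' := by
      intro y hy
      have hyx := ne_of_mem_erase hy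
      rcases mem_insert.mp (mem_of_mem_erase hy) with rfl | hyf
      · exact mem_insert_self y _
      · exact mem_insert_of_mem (mem_erase.mpr ⟨hyx, mem_union_left _ hyf⟩)
    have hS'ne : (f ∪ g).erase x ≠ (insert v f).erase x := by
      intro h
      have : v ∈ (insert v f).erase x := mem_erase.mpr ⟨hvx, mem_insert_self v f⟩
      rw [← h] at this
      exact hvYx this
    have hw'S' : w' ∈ S' := mem_insert_of_mem (mem_erase.mpr ⟨fun h => hxw' h.symm, mem_union_left _ hw'f⟩)
    have haS' : a ∈ S' := mem_insert_of_mem (mem_erase.mpr ⟨fun h => hag (h ▸ hxg), mem_union_left _ haf⟩)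
    -- S'.erase a is not an edge (it is ⊆ insert v g and contains v)
    have hS'aE : S'.erase a ∉ E := by
      intro h
      refine hZE _ h ?_ (mem_erase.mpr ⟨hva, mem_insert_self v _⟩)
      intro y hy
      have hya := ne_of_mem_erase hy
      rcases mem_insert.mp (mem_of_mem_erase hy) with rfl | hy'
      · exact mem_insert_self y g
      · exact mem_insert_of_mem (hfa y (mem_of_mem_erase hy') hya)
    -- h := S'.erase w' ∈ E
    have hhE : S'.erase w' ∈ E := by
      have hcs : (S'.erase w').card = ℓ := by rw [card_erase_of_mem hw'S', hS'c]; omega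
      have hct : (S'.erase a).card = ℓ := by rw [card_erase_of_mem haS', hS'c]; omega
      have hst : S'.erase w' ≠ S'.erase a := by
        intro h
        have : a ∈ S'.erase w' := mem_erase.mpr ⟨haw', haS'⟩
        rw [h] at this
        exact (ne_of_mem_erase this) rfl
      rcases key_lemma hunif hdisp hS'c hYx hXx hYxS' hXxS' hS'ne
        (erase_subset _ _) (erase_subset _ _) hcs hct hst with h | h
      · exact h
      · exact absurd h hS'aE
    -- T := insert v ((f ∪ g).erase w')
    set T : Finset V := insert v ((f ∪ g).erase w') with hT
    have hvYw' : v ∉ (f ∪ g).erase w' := fun h => hvY (mem_of_mem_erase h)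
    have hTc : T.card = ℓ + 1 := by
      rw [hT, card_insert_of_notMem hvYw', card_erase_of_mem (mem_union_left _ hw'f), hYc]
      omega
    have hhT : S'.erase w' ⊆ T := by
      intro y hy
      have hyw' := ne_of_mem_erase hy
      rcases mem_insert.mp (mem_of_mem_erase hy) with rfl | hy'
      · exact mem_insert_self y _
      · exact mem_insert_of_mem (mem_erase.mpr ⟨hyw', mem_of_mem_erase hy'⟩)
    have hXw'T : (insert v f).erase w' ⊆ T := by
      intro y hy
      have hyw' := ne_of_mem_erase hy
      rcases mem_insert.mp (mem_of_mem_erase hy) with rfl | hyf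
      · exact mem_insert_self y _
      · exact mem_insert_of_mem (mem_erase.mpr ⟨hyw', mem_union_left _ hyf⟩)
    have hhne : S'.erase w' ≠ (insert v f).erase w' := by
      intro h
      have hbh : b ∈ S'.erase w' := by
        refine mem_erase.mpr ⟨hbw', mem_insert_of_mem (mem_erase.mpr ⟨hbx, mem_union_right _ hbg⟩)⟩
      rw [h] at hbh
      rcases mem_insert.mp (mem_of_mem_erase hbh) with h' | h'
      · exact hvb h'.symm
      · exact hbf h'
    have haT : a ∈ T := mem_insert_of_mem (mem_erase.mpr ⟨haw', mem_union_left _ haf⟩)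
    -- T.erase a not an edge
    have hTaE : T.erase a ∉ E := by
      intro h
      refine hZE _ h ?_ (mem_erase.mpr ⟨hva, mem_insert_self v _⟩)
      intro y hy
      have hya := ne_of_mem_erase hy
      rcases mem_insert.mp (mem_of_mem_erase hy) with rfl | hy'
      · exact mem_insert_self y g
      · exact mem_insert_of_mem (hfa y (mem_of_mem_erase hy') hya)
    -- (f ∪ g).erase w' ⊆ T, card ℓ, not an edge: contradiction via key_lemma
    have hcs : ((f ∪ g).erase w').card = ℓ := by
      rw [card_erase_of_mem (mem_union_left _ hw'f), hYc]; omega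
    have hct : (T.erase a).card = ℓ := by rw [card_erase_of_mem haT, hTc]; omega
    have hst : (f ∪ g).erase w' ≠ T.erase a := by
      intro h
      have : v ∈ T.erase a := mem_erase.mpr ⟨hva, mem_insert_self v _⟩
      rw [← h] at this
      exact hvYw' this
    rcases key_lemma hunif hdisp hTc hhE (hXedge w' hw'W) hhT hXw'T hhne
      (subset_insert _ _) (erase_subset _ _) hcs hct hst with h | h
    · exact hYw' h
    · exact hTaE h
end

section
/- Let G be a disperse ℓ-uniform hypergraph (ℓ ≥ 3), let v ∈ V(G), and let A, B ⊆ V(G)∖{v} with |A| = |B| = ℓ−2. If A ∪ {v} and B ∪ {v} are connected by a tight walk in G, then A and B are connected by a tight walk in the link L(v). -/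
open Finset

section Aux
variable {V : Type*} [DecidableEq V]

private lemma inter_ge {W A B : Finset V} (h1 : W ⊆ A) (h2 : W ⊆ B) {n : ℕ}
    (hn : n ≤ W.card) : n ≤ (A ∩ B).card :=
  hn.trans (card_le_card (subset_inter h1 h2))

private lemma erase_sub {e f : Finset V} {a : V} {m : ℕ} (he : e.card = m)
    (hef : m - 1 ≤ (e ∩ f).card) (ha : a ∈ e) (haf : a ∉ f) : e.erase a ⊆ f := by
  have h1 : e ∩ f ⊆ e.erase a := fun z hz =>
    mem_erase.mpr ⟨fun h => haf (h ▸ (mem_inter.mp hz).2), (mem_inter.mp hz).1⟩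
  have h2 : (e.erase a).card = m - 1 := by rw [card_erase_of_mem ha, he]
  have h3 := eq_of_subset_of_card_le h1 (by omega)
  rw [← h3]
  exact inter_subset_right

private lemma lemF {ℓ : ℕ} (hℓ : 3 ≤ ℓ) {E : Finset (Finset V)}
    (hunif : ∀ e ∈ E, e.card = ℓ) (hdisp : Disperse ℓ E)
    {X e1 e2 g h' : Finset V} (hX : X.card = ℓ + 1)
    (he1 : e1 ∈ E) (he2 : e2 ∈ E) (h12 : e1 ≠ e2) (h1X : e1 ⊆ X) (h2X : e2 ⊆ X)
    (hgX : g ⊆ X) (hhX : h' ⊆ X) (hgc : g.card = ℓ) (hhc : h'.card = ℓ)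
    (hgh : g ≠ h') : g ∈ E ∨ h' ∈ E := by
  by_contra hc
  push_neg at hc
  obtain ⟨hgE, hhE⟩ := hc
  have hgm : g ∈ X.powersetCard ℓ := mem_powersetCard.mpr ⟨hgX, hgc⟩
  have hhm : h' ∈ (X.powersetCard ℓ).erase g :=
    mem_erase.mpr ⟨fun h => hgh h.symm, mem_powersetCard.mpr ⟨hhX, hhc⟩⟩
  have hsub : E.filter (· ⊆ X) ⊆ ((X.powersetCard ℓ).erase g).erase h' := by
    intro k hk
    rw [mem_filter] at hk
    refine mem_erase.mpr ⟨?_, mem_erase.mpr ⟨?_, mem_powersetCard.mpr ⟨hk.2, hunif _ hk.1⟩⟩⟩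
    · rintro rfl; exact hhE hk.1
    · rintro rfl; exact hgE hk.1
  have hpc : (X.powersetCard ℓ).card = ℓ + 1 := by
    rw [card_powersetCard, hX, Nat.choose_succ_self_right]
  have hcard1 : (((X.powersetCard ℓ).erase g).erase h').card = ℓ - 1 := by
    rw [card_erase_of_mem hhm, card_erase_of_mem hgm, hpc]; omega
  have hle := card_le_card hsub
  have h2 : 1 < (E.filter (· ⊆ X)).card :=
    one_lt_card.mpr ⟨e1, mem_filter.mpr ⟨he1, h1X⟩, e2, mem_filter.mpr ⟨he2, h2X⟩, h12⟩
  rcases hdisp X hX with h | h | h | h <;> omega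

private def LAdj (ℓ : ℕ) (L : Finset (Finset V)) (g g' : Finset V) : Prop :=
  g ∈ L ∧ g' ∈ L ∧ ℓ - 2 ≤ (g ∩ g').card

private lemma mem_link {E : Finset (Finset V)} {v : V} {q : Finset V}
    (hq : q ∈ E) (hv : v ∈ q) : q.erase v ∈ linkEdges E v :=
  mem_image.mpr ⟨q, mem_filter.mpr ⟨hq, hv⟩, rfl⟩

private lemma reach_single {ℓ : ℕ} {E : Finset (Finset V)} {v : V} {p q W : Finset V}
    (hp : p ∈ E) (hq : q ∈ E) (hvp : v ∈ p) (hvq : v ∈ q)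
    (hWp : W ⊆ p) (hWq : W ⊆ q) (hWv : v ∉ W) (hWc : ℓ - 2 ≤ W.card) :
    Relation.ReflTransGen (LAdj ℓ (linkEdges E v)) (p.erase v) (q.erase v) := by
  refine Relation.ReflTransGen.single ⟨mem_link hp hvp, mem_link hq hvq, inter_ge ?_ ?_ hWc⟩
  · exact fun z hz => mem_erase.mpr ⟨fun h => hWv (h ▸ hz), hWp hz⟩
  · exact fun z hz => mem_erase.mpr ⟨fun h => hWv (h ▸ hz), hWq hz⟩

private lemma reach_amb {ℓ : ℕ} {E : Finset (Finset V)} {v : V} {X p q : Finset V}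
    (hX : X.card = ℓ + 1) (hpX : p ⊆ X) (hqX : q ⊆ X) (hp : p ∈ E) (hq : q ∈ E)
    (hpc : p.card = ℓ) (hqc : q.card = ℓ) (hvp : v ∈ p) (hvq : v ∈ q) :
    Relation.ReflTransGen (LAdj ℓ (linkEdges E v)) (p.erase v) (q.erase v) := by
  have hu : (p ∪ q).card ≤ ℓ + 1 := hX ▸ card_le_card (union_subset hpX hqX)
  have hie := card_union_add_card_inter p q
  have hvin : v ∈ p ∩ q := mem_inter.mpr ⟨hvp, hvq⟩
  have hWc : ℓ - 2 ≤ ((p ∩ q).erase v).card := by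
    rw [card_erase_of_mem hvin]; omega
  exact reach_single hp hq hvp hvq ((erase_subset _ _).trans inter_subset_left)
    ((erase_subset _ _).trans inter_subset_right) (notMem_erase _ _) hWc


private lemma stepD {ℓ : ℕ} (hℓ : 3 ≤ ℓ) {E : Finset (Finset V)} {v : V}
    (hunif : ∀ e ∈ E, e.card = ℓ) (hdisp : Disperse ℓ E)
    {e f p : Finset V} (he : e ∈ E) (hf : f ∈ E) (hef : ℓ - 1 ≤ (e ∩ f).card)
    (hve : v ∉ e) (hvf : v ∈ f) (hp : p ∈ E) (hvp : v ∈ p)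
    (hpe : ℓ - 2 ≤ (p ∩ e).card) :
    Relation.ReflTransGen (LAdj ℓ (linkEdges E v)) (p.erase v) (f.erase v) := by
  have hec := hunif e he
  have hfc := hunif f hf
  have hpc := hunif p hp
  have hXc : (insert v e).card = ℓ + 1 := by rw [card_insert_of_notMem hve, hec]
  have hfe : f.erase v ⊆ e := erase_sub hfc (by rwa [inter_comm]) hvf hve
  have hfX : f ⊆ insert v e := by
    intro z hz
    rcases eq_or_ne z v with rfl | hzv
    · exact mem_insert_self _ _
    · exact mem_insert_of_mem (hfe (mem_erase.mpr ⟨hzv, hz⟩))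
  have hnef : e ≠ f := fun hh => hve (hh ▸ hvf)
  obtain ⟨x, hxe, hxp, hqx⟩ : ∃ x, x ∈ e ∧ x ∉ p ∧ insert v (e.erase x) ∈ E := by
    have h1 := card_sdiff_add_card_inter e p
    have h2 : e ∩ p ⊆ p.erase v := fun z hz =>
      mem_erase.mpr ⟨fun hh => hve (hh ▸ (mem_inter.mp hz).1), (mem_inter.mp hz).2⟩
    have h2' : (e ∩ p).card ≤ ℓ - 1 := by
      have := card_le_card h2
      rwa [card_erase_of_mem hvp, hpc] at this
    by_cases hsh : ℓ - 1 ≤ (p ∩ e).card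
    · have hPe : p.erase v ⊆ e := erase_sub hpc hsh hvp hve
      have h3 : 0 < (e \ p).card := by omega
      obtain ⟨x, hx⟩ := card_pos.mp h3
      rw [mem_sdiff] at hx
      have hsub : p ⊆ insert v (e.erase x) := by
        intro z hz
        rcases eq_or_ne z v with rfl | hzv
        · exact mem_insert_self _ _
        · exact mem_insert_of_mem (mem_erase.mpr
            ⟨fun hh => hx.2 (hh ▸ hz), hPe (mem_erase.mpr ⟨hzv, hz⟩)⟩)
      have hcx : (insert v (e.erase x)).card = ℓ := by
        rw [card_insert_of_notMem (fun hh => hve (mem_of_mem_erase hh)),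
          card_erase_of_mem hx.1, hec]; omega
      have heq := eq_of_subset_of_card_le hsub (by omega)
      exact ⟨x, hx.1, hx.2, heq ▸ hp⟩
    · have hpe2 : (p ∩ e).card = ℓ - 2 := by omega
      have h3 : (e \ p).card = 2 := by
        rw [inter_comm] at hpe2; omega
      obtain ⟨u, w, huw, hset⟩ := card_eq_two.mp h3
      have hu : u ∈ e \ p := hset ▸ mem_insert_self u {w}
      have hw : w ∈ e \ p := hset ▸ mem_insert_of_mem (mem_singleton_self w)
      rw [mem_sdiff] at hu hw
      have hcu : (insert v (e.erase u)).card = ℓ := by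
        rw [card_insert_of_notMem (fun hh => hve (mem_of_mem_erase hh)),
          card_erase_of_mem hu.1, hec]; omega
      have hcw : (insert v (e.erase w)).card = ℓ := by
        rw [card_insert_of_notMem (fun hh => hve (mem_of_mem_erase hh)),
          card_erase_of_mem hw.1, hec]; omega
      have hsubu : insert v (e.erase u) ⊆ insert v e :=
        insert_subset_insert _ (erase_subset _ _)
      have hsubw : insert v (e.erase w) ⊆ insert v e :=
        insert_subset_insert _ (erase_subset _ _)
      have hne2 : insert v (e.erase u) ≠ insert v (e.erase w) := by
        intro hh
        have : u ∈ insert v (e.erase u) := by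
          rw [hh]
          exact mem_insert_of_mem (mem_erase.mpr ⟨huw, hu.1⟩)
        rcases mem_insert.mp this with h' | h'
        · exact hve (h' ▸ hu.1)
        · exact (notMem_erase u e) h'
      rcases lemF hℓ hunif hdisp hXc he hf hnef (subset_insert _ _) hfX hsubu hsubw
        hcu hcw hne2 with hq | hq
      · exact ⟨u, hu.1, hu.2, hq⟩
      · exact ⟨w, hw.1, hw.2, hq⟩
  -- now build reach
  have hqxc : (insert v (e.erase x)).card = ℓ := by
    rw [card_insert_of_notMem (fun hh => hve (mem_of_mem_erase hh)),
      card_erase_of_mem hxe, hec]; omega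
  have hvqx : v ∈ insert v (e.erase x) := mem_insert_self _ _
  have step1 : Relation.ReflTransGen (LAdj ℓ (linkEdges E v)) (p.erase v)
      ((insert v (e.erase x)).erase v) := by
    refine reach_single hp hqx hvp hvqx (W := p ∩ e) inter_subset_left ?_
      (fun hh => hve (mem_inter.mp hh).2) hpe
    intro z hz
    rw [mem_inter] at hz
    exact mem_insert_of_mem (mem_erase.mpr ⟨fun hh => hxp (hh ▸ hz.1), hz.2⟩)
  have step2 := reach_amb hXc (insert_subset_insert _ (erase_subset _ _)) hfX hqx hf
    hqxc hfc hvqx hvf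
  exact step1.trans step2

private def InvH (ℓ : ℕ) (E : Finset (Finset V)) (v : V) (e p : Finset V) : Prop :=
  ℓ - 2 ≤ (p ∩ e).card ∧ ∃ e₂ ∈ E, ℓ - 1 ≤ (e₂ ∩ e).card ∧ p.erase v ⊆ e ∪ e₂

private lemma invH_q0 {ℓ : ℕ} {E : Finset (Finset V)} {v : V} {e f : Finset V}
    (hec : e.card = ℓ) (he : e ∈ E) (hef : ℓ - 1 ≤ (e ∩ f).card)
    {a x : V} (hae : a ∈ e) (heaf : e.erase a ⊆ f) (hxe : x ∈ e) (hxa : x ≠ a) :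
    InvH ℓ E v f (insert v (e.erase x)) := by
  constructor
  · refine inter_ge (W := (e.erase x).erase a)
      ((erase_subset _ _).trans (subset_insert _ _)) ?_ ?_
    · intro z hz
      rw [mem_erase, mem_erase] at hz
      exact heaf (mem_erase.mpr ⟨hz.1, hz.2.2⟩)
    · rw [card_erase_of_mem (mem_erase.mpr ⟨Ne.symm hxa, hae⟩), card_erase_of_mem hxe, hec]
      omega
  · refine ⟨e, he, hef, ?_⟩
    intro z hz
    rw [mem_erase] at hz
    rcases mem_insert.mp hz.2 with rfl | h
    · exact absurd rfl hz.1
    · exact mem_union_right _ (mem_of_mem_erase h)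

private lemma invH_qf {ℓ : ℕ} {E : Finset (Finset V)} {v : V} {e f : Finset V}
    (hec : e.card = ℓ) (he : e ∈ E) (hef : ℓ - 1 ≤ (e ∩ f).card)
    {a : V} (hae : a ∈ e) (heaf : e.erase a ⊆ f) :
    InvH ℓ E v f (insert v (e.erase a)) := by
  constructor
  · exact inter_ge (subset_insert _ _) heaf (by rw [card_erase_of_mem hae, hec]; omega)
  · refine ⟨e, he, hef, ?_⟩
    intro z hz
    rw [mem_erase] at hz
    rcases mem_insert.mp hz.2 with rfl | h
    · exact absurd rfl hz.1
    · exact mem_union_right _ (mem_of_mem_erase h)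

private lemma invH_q1 {ℓ : ℕ} {E : Finset (Finset V)} {v : V} {e f : Finset V}
    (hec : e.card = ℓ) (hef : ℓ - 1 ≤ (e ∩ f).card)
    {a x c : V} (hae : a ∈ e) (heaf : e.erase a ⊆ f) (hxe : x ∈ e) (hxa : x ≠ a)
    (hce : c ∉ e) (hsa : insert c (e.erase a) ∈ E) :
    InvH ℓ E v f (insert v (insert c ((e.erase x).erase a))) := by
  constructor
  · refine inter_ge (W := (e.erase x).erase a)
      ((subset_insert _ _).trans (subset_insert _ _)) ?_ ?_
    · intro z hz
      rw [mem_erase, mem_erase] at hz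
      exact heaf (mem_erase.mpr ⟨hz.1, hz.2.2⟩)
    · rw [card_erase_of_mem (mem_erase.mpr ⟨Ne.symm hxa, hae⟩), card_erase_of_mem hxe, hec]
      omega
  · refine ⟨insert c (e.erase a), hsa, ?_, ?_⟩
    · exact inter_ge (subset_insert _ _) heaf (by rw [card_erase_of_mem hae, hec])
    · intro z hz
      rw [mem_erase] at hz
      rcases mem_insert.mp hz.2 with rfl | h
      · exact absurd rfl hz.1
      · rcases mem_insert.mp h with rfl | h
        · exact mem_union_right _ (mem_insert_self _ _)
        · rw [mem_erase, mem_erase] at h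
          exact mem_union_left _ (heaf (mem_erase.mpr ⟨h.1, h.2.2⟩))

private lemma stepC {ℓ : ℕ} (hℓ : 3 ≤ ℓ) {E : Finset (Finset V)} {v : V}
    (hunif : ∀ e ∈ E, e.card = ℓ) (hdisp : Disperse ℓ E)
    {e f p : Finset V} (he : e ∈ E) (hf : f ∈ E) (hef : ℓ - 1 ≤ (e ∩ f).card)
    (hve : v ∉ e) (hvf : v ∉ f) (hp : p ∈ E) (hvp : v ∈ p) (hH : InvH ℓ E v e p) :
    ∃ q, q ∈ E ∧ v ∈ q ∧ InvH ℓ E v f q ∧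
      Relation.ReflTransGen (LAdj ℓ (linkEdges E v)) (p.erase v) (q.erase v) := by
  obtain ⟨hpe, e₂, he₂, he₂e, hPe₂⟩ := hH
  have hec := hunif e he
  have hfc := hunif f hf
  have hpc := hunif p hp
  have he₂c := hunif e₂ he₂
  rcases eq_or_ne e f with rfl | hnef
  · exact ⟨p, hp, hvp, ⟨hpe, e₂, he₂, he₂e, hPe₂⟩, .refl⟩
  obtain ⟨a, hae, haf⟩ : ∃ a, a ∈ e ∧ a ∉ f := by
    by_contra h
    push_neg at h
    exact hnef (eq_of_subset_of_card_le h (by rw [hec, hfc]))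
  have heaf : e.erase a ⊆ f := erase_sub hec hef hae haf
  by_cases hsh : ℓ - 1 ≤ (p ∩ e).card
  · -- shape (i): q = p
    have hPe : p.erase v ⊆ e := erase_sub hpc hsh hvp hve
    refine ⟨p, hp, hvp, ⟨?_, e, he, hef, hPe.trans subset_union_right⟩, .refl⟩
    refine inter_ge (W := (p ∩ e).erase a) ((erase_subset _ _).trans inter_subset_left) ?_ ?_
    · intro z hz
      rw [mem_erase, mem_inter] at hz
      exact heaf (mem_erase.mpr ⟨hz.1, hz.2.2⟩)
    · have := pred_card_le_card_erase (s := p ∩ e) (a := a)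
      omega
  -- shape (ii)
  have hpe2 : (p ∩ e).card = ℓ - 2 := by omega
  have hPie : p.erase v ∩ e = p ∩ e := by
    ext z
    simp only [mem_inter, mem_erase]
    exact ⟨fun h => ⟨h.1.2, h.2⟩, fun h => ⟨⟨fun hh => hve (hh ▸ h.2), h.1⟩, h.2⟩⟩
  have h1 := card_sdiff_add_card_inter (p.erase v) e
  rw [hPie] at h1
  have hPcard : (p.erase v).card = ℓ - 1 := by rw [card_erase_of_mem hvp, hpc]
  have hc1 : (p.erase v \ e).card = 1 := by omega
  obtain ⟨c, hc⟩ := card_eq_one.mp hc1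
  have hcP : c ∈ p.erase v \ e := hc ▸ mem_singleton_self c
  rw [mem_sdiff, mem_erase] at hcP
  obtain ⟨⟨hcv, hcp⟩, hce⟩ := hcP
  have hPsub : ∀ z ∈ p, z = v ∨ z ∈ e ∨ z = c := by
    intro z hz
    rcases eq_or_ne z v with rfl | hzv
    · exact Or.inl rfl
    by_cases hze : z ∈ e
    · exact Or.inr (Or.inl hze)
    have hzz : z ∈ p.erase v \ e := mem_sdiff.mpr ⟨mem_erase.mpr ⟨hzv, hz⟩, hze⟩
    rw [hc] at hzz
    exact Or.inr (Or.inr (mem_singleton.mp hzz))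
  have h2 := card_sdiff_add_card_inter e p
  have h2' : (e ∩ p).card = ℓ - 2 := by rw [inter_comm]; exact hpe2
  have hc2 : (e \ p).card = 2 := by omega
  obtain ⟨u, w, huw, hset⟩ := card_eq_two.mp hc2
  have hu : u ∈ e \ p := hset ▸ mem_insert_self u {w}
  have hw : w ∈ e \ p := hset ▸ mem_insert_of_mem (mem_singleton_self w)
  rw [mem_sdiff] at hu hw
  obtain ⟨hue, hup⟩ := hu
  obtain ⟨hwe, hwp⟩ := hw
  have hesub : ∀ z ∈ e, z ∈ p ∨ z = u ∨ z = w := by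
    intro z hz
    by_cases hzp : z ∈ p
    · exact Or.inl hzp
    have hzz : z ∈ e \ p := mem_sdiff.mpr ⟨hz, hzp⟩
    rw [hset] at hzz
    rcases mem_insert.mp hzz with h | h
    · exact Or.inr (Or.inl h)
    · exact Or.inr (Or.inr (mem_singleton.mp h))
  have hce₂ : c ∈ e₂ := by
    rcases mem_union.mp (hPe₂ (mem_erase.mpr ⟨hcv, hcp⟩)) with h | h
    · exact absurd h hce
    · exact h
  have he₂Y : e₂ ⊆ insert c e := by
    intro z hz
    by_contra hzz
    rw [mem_insert] at hzz
    push_neg at hzz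
    have hzs : ({z, c} : Finset V) ⊆ e₂ \ e := by
      intro y hy
      rcases mem_insert.mp hy with rfl | hy
      · exact mem_sdiff.mpr ⟨hz, hzz.2⟩
      · rw [mem_singleton] at hy
        subst hy
        exact mem_sdiff.mpr ⟨hce₂, hce⟩
    have hcard2 : ({z, c} : Finset V).card = 2 := card_pair hzz.1
    have h3 := card_sdiff_add_card_inter e₂ e
    have h4 := card_le_card hzs
    omega
  -- generic helpers
  have hcard_s : ∀ x ∈ e, (insert c (e.erase x)).card = ℓ := by
    intro x hx
    rw [card_insert_of_notMem (fun hh => hce (mem_of_mem_erase hh)),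
      card_erase_of_mem hx, hec]
    omega
  have hcard_q0 : ∀ x ∈ e, (insert v (e.erase x)).card = ℓ := by
    intro x hx
    rw [card_insert_of_notMem (fun hh => hve (mem_of_mem_erase hh)),
      card_erase_of_mem hx, hec]
    omega
  have hvs : ∀ x : V, v ∉ insert c (e.erase x) := by
    intro x hh
    rcases mem_insert.mp hh with h | h
    · exact hcv h.symm
    · exact hve (mem_of_mem_erase h)
  have hcard_T : ∀ x ∈ e, (insert v (insert c (e.erase x))).card = ℓ + 1 := by
    intro x hx
    rw [card_insert_of_notMem (hvs x), hcard_s x hx]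
  have hcard_h : ∀ x ∈ e, ∀ y ∈ e.erase x,
      (insert v (insert c ((e.erase x).erase y))).card = ℓ := by
    intro x hx y hy
    have hcy : c ∉ (e.erase x).erase y := fun hh => hce (mem_of_mem_erase (mem_of_mem_erase hh))
    have hvy : v ∉ insert c ((e.erase x).erase y) := by
      intro hh
      rcases mem_insert.mp hh with h | h
      · exact hcv h.symm
      · exact hve (mem_of_mem_erase (mem_of_mem_erase h))
    rw [card_insert_of_notMem hvy, card_insert_of_notMem hcy, card_erase_of_mem hy,
      card_erase_of_mem hx, hec]
    omega
  have hpT : ∀ x : V, x ∉ p → p ⊆ insert v (insert c (e.erase x)) := by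
    intro x hxp z hz
    rcases hPsub z hz with rfl | hze | rfl
    · exact mem_insert_self _ _
    · exact mem_insert_of_mem (mem_insert_of_mem (mem_erase.mpr ⟨fun hh => hxp (hh ▸ hz), hze⟩))
    · exact mem_insert_of_mem (mem_insert_self _ _)
  have hYc : (insert c e).card = ℓ + 1 := by rw [card_insert_of_notMem hce, hec]
  have hne_e₂ : e ≠ e₂ := fun hh => hce (hh ▸ hce₂)
  have hFY : ∀ x ∈ e, ∀ y ∈ e, x ≠ y →
      insert c (e.erase x) ∈ E ∨ insert c (e.erase y) ∈ E := by
    intro x hx y hy hxy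
    refine lemF hℓ hunif hdisp hYc he he₂ hne_e₂ (subset_insert _ _) he₂Y
      (insert_subset_insert _ (erase_subset _ _)) (insert_subset_insert _ (erase_subset _ _))
      (hcard_s x hx) (hcard_s y hy) ?_
    intro hh
    have h1 : y ∈ insert c (e.erase x) :=
      mem_insert_of_mem (mem_erase.mpr ⟨Ne.symm hxy, hy⟩)
    rw [hh] at h1
    rcases mem_insert.mp h1 with h | h
    · exact hce (h ▸ hy)
    · exact (notMem_erase y e) h
  have hq0q1ne : ∀ x y : V,
      insert v (e.erase x) ≠ insert v (insert c ((e.erase x).erase y)) := by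
    intro x y hh
    have h1 : c ∈ insert v (insert c ((e.erase x).erase y)) :=
      mem_insert_of_mem (mem_insert_self _ _)
    rw [← hh] at h1
    rcases mem_insert.mp h1 with h | h
    · exact hcv h
    · exact hce (mem_of_mem_erase h)
  have hswapsub : ∀ x y : V,
      insert v (insert c ((e.erase x).erase y)) ⊆ insert v (insert c (e.erase y)) := by
    intro x y z hz
    rcases mem_insert.mp hz with rfl | hz
    · exact mem_insert_self _ _
    rcases mem_insert.mp hz with rfl | hz
    · exact mem_insert_of_mem (mem_insert_self _ _)
    rw [mem_erase, mem_erase] at hz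
    exact mem_insert_of_mem (mem_insert_of_mem (mem_erase.mpr ⟨hz.1, hz.2.2⟩))
  have hq1subT : ∀ x y : V,
      insert v (insert c ((e.erase x).erase y)) ⊆ insert v (insert c (e.erase x)) :=
    fun x y => insert_subset_insert _ (insert_subset_insert _ (erase_subset _ _))
  have hq0subT : ∀ x : V, insert v (e.erase x) ⊆ insert v (insert c (e.erase x)) :=
    fun x => insert_subset_insert _ (subset_insert _ _)
  by_cases hcf : c ∈ f
  · -- q = p, e₂' = e
    refine ⟨p, hp, hvp, ⟨?_, e, he, hef, ?_⟩, .refl⟩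
    · have hca : c ∉ (p ∩ e).erase a :=
        fun hh => hce (mem_inter.mp (mem_of_mem_erase hh)).2
      refine inter_ge (W := insert c ((p ∩ e).erase a)) ?_ ?_ ?_
      · intro z hz
        rcases mem_insert.mp hz with rfl | hz
        · exact hcp
        · exact (mem_inter.mp (mem_of_mem_erase hz)).1
      · intro z hz
        rcases mem_insert.mp hz with rfl | hz
        · exact hcf
        · rw [mem_erase, mem_inter] at hz
          exact heaf (mem_erase.mpr ⟨hz.1, hz.2.2⟩)
      · rw [card_insert_of_notMem hca]
        have := pred_card_le_card_erase (s := p ∩ e) (a := a)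
        omega
    · intro z hz
      rw [mem_erase] at hz
      rcases hPsub z hz.2 with rfl | hze | rfl
      · exact absurd rfl hz.1
      · exact mem_union_right _ hze
      · exact mem_union_left _ hcf
  by_cases hap : a ∈ p
  · -- a ∈ p
    have hau : a ≠ u := fun hh => hup (hh ▸ hap)
    have haw : a ≠ w := fun hh => hwp (hh ▸ hap)
    by_cases hsa : insert c (e.erase a) ∈ E
    · obtain ⟨xb, hxbe, hxbp, hsxb⟩ : ∃ xb, xb ∈ e ∧ xb ∉ p ∧ insert c (e.erase xb) ∈ E := by
        rcases hFY u hue w hwe huw with h | h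
        · exact ⟨u, hue, hup, h⟩
        · exact ⟨w, hwe, hwp, h⟩
      have haxb : a ≠ xb := fun hh => hxbp (hh ▸ hap)
      have hTc := hcard_T xb hxbe
      have hpTx := hpT xb hxbp
      have hpne : p ≠ insert c (e.erase xb) := fun hh => hvs xb (hh ▸ hvp)
      by_cases hq0 : insert v (e.erase xb) ∈ E
      · refine ⟨_, hq0, mem_insert_self _ _,
          invH_q0 hec he hef hae heaf hxbe (Ne.symm haxb), ?_⟩
        exact reach_amb hTc hpTx (hq0subT xb) hp hq0 hpc (hcard_q0 xb hxbe) hvp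
          (mem_insert_self _ _)
      · have hq1 : insert v (insert c ((e.erase xb).erase a)) ∈ E := by
          rcases lemF hℓ hunif hdisp hTc hp hsxb hpne hpTx (subset_insert _ _)
            (hq0subT xb) (hq1subT xb a) (hcard_q0 xb hxbe)
            (hcard_h xb hxbe a (mem_erase.mpr ⟨haxb, hae⟩)) (hq0q1ne xb a) with h | h
          · exact absurd h hq0
          · exact h
        refine ⟨_, hq1, mem_insert_self _ _,
          invH_q1 hec hef hae heaf hxbe (Ne.symm haxb) hce hsa, ?_⟩
        exact reach_amb hTc hpTx (hq1subT xb a) hp hq1 hpc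
          (hcard_h xb hxbe a (mem_erase.mpr ⟨haxb, hae⟩)) hvp (mem_insert_self _ _)
    · -- s_a ∉ E : both s_u and s_w in E
      have hsu : insert c (e.erase u) ∈ E := by
        rcases hFY a hae u hue hau with h | h
        · exact absurd h hsa
        · exact h
      have hsw : insert c (e.erase w) ∈ E := by
        rcases hFY a hae w hwe haw with h | h
        · exact absurd h hsa
        · exact h
      have hTuc := hcard_T u hue
      have hpTu := hpT u hup
      have hTwc := hcard_T w hwe
      have hpTw := hpT w hwp
      by_cases hq0u : insert v (e.erase u) ∈ E
      · refine ⟨_, hq0u, mem_insert_self _ _,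
          invH_q0 hec he hef hae heaf hue (Ne.symm hau), ?_⟩
        exact reach_amb hTuc hpTu (hq0subT u) hp hq0u hpc (hcard_q0 u hue) hvp
          (mem_insert_self _ _)
      by_cases hq0w : insert v (e.erase w) ∈ E
      · refine ⟨_, hq0w, mem_insert_self _ _,
          invH_q0 hec he hef hae heaf hwe (Ne.symm haw), ?_⟩
        exact reach_amb hTwc hpTw (hq0subT w) hp hq0w hpc (hcard_q0 w hwe) hvp
          (mem_insert_self _ _)
      have hq1 : insert v (insert c ((e.erase u).erase a)) ∈ E := by
        rcases lemF hℓ hunif hdisp hTuc hp hsu (fun hh => hvs u (hh ▸ hvp)) hpTu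
          (subset_insert _ _) (hq0subT u) (hq1subT u a) (hcard_q0 u hue)
          (hcard_h u hue a (mem_erase.mpr ⟨hau, hae⟩)) (hq0q1ne u a) with h | h
        · exact absurd h hq0u
        · exact h
      have hq2 : insert v (insert c ((e.erase w).erase a)) ∈ E := by
        rcases lemF hℓ hunif hdisp hTwc hp hsw (fun hh => hvs w (hh ▸ hvp)) hpTw
          (subset_insert _ _) (hq0subT w) (hq1subT w a) (hcard_q0 w hwe)
          (hcard_h w hwe a (mem_erase.mpr ⟨haw, hae⟩)) (hq0q1ne w a) with h | h
        · exact absurd h hq0w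
        · exact h
      have hNc := hcard_T a hae
      have hq1N := hswapsub u a
      have hq2N := hswapsub w a
      have hq1q2ne : insert v (insert c ((e.erase u).erase a)) ≠
          insert v (insert c ((e.erase w).erase a)) := by
        intro hh
        have hwin : w ∈ insert v (insert c ((e.erase u).erase a)) :=
          mem_insert_of_mem (mem_insert_of_mem
            (mem_erase.mpr ⟨Ne.symm haw, mem_erase.mpr ⟨Ne.symm huw, hwe⟩⟩))
        rw [hh] at hwin
        rcases mem_insert.mp hwin with h | h
        · exact hve (h ▸ hwe)
        rcases mem_insert.mp h with h | h
        · exact hce (h ▸ hwe)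
        · exact (notMem_erase w e) (mem_of_mem_erase h)
      have hqf : insert v (e.erase a) ∈ E := by
        rcases lemF hℓ hunif hdisp hNc hq1 hq2 hq1q2ne hq1N hq2N
          (subset_insert _ _) (hq0subT a) (hcard_s a hae) (hcard_q0 a hae)
          (fun hh => hvs a (hh ▸ mem_insert_self v _)) with h | h
        · exact absurd h hsa
        · exact h
      refine ⟨_, hqf, mem_insert_self _ _, invH_qf hec he hef hae heaf, ?_⟩
      refine (reach_amb hTuc hpTu (hq1subT u a) hp hq1 hpc
        (hcard_h u hue a (mem_erase.mpr ⟨hau, hae⟩)) hvp (mem_insert_self _ _)).trans ?_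
      exact reach_amb hNc hq1N (hq0subT a) hq1 hqf
        (hcard_h u hue a (mem_erase.mpr ⟨hau, hae⟩)) (hcard_q0 a hae)
        (mem_insert_self _ _) (mem_insert_self _ _)
  · -- a ∉ p
    have haeu : a = u ∨ a = w := by
      rcases hesub a hae with h | h | h
      · exact absurd h hap
      · exact Or.inl h
      · exact Or.inr h
    obtain ⟨xb, hxbe, hxbp, haxb⟩ : ∃ xb, xb ∈ e ∧ xb ∉ p ∧ a ≠ xb := by
      rcases haeu with rfl | rfl
      · exact ⟨w, hwe, hwp, huw⟩
      · exact ⟨u, hue, hup, fun hh => huw hh.symm⟩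
    by_cases hsa : insert c (e.erase a) ∈ E
    · -- q = p with e₂' = s_a
      refine ⟨p, hp, hvp, ⟨?_, insert c (e.erase a), hsa, ?_, ?_⟩, .refl⟩
      · refine inter_ge (W := p ∩ e) inter_subset_left ?_ (by omega)
        intro z hz
        rw [mem_inter] at hz
        exact heaf (mem_erase.mpr ⟨fun hh => hap (hh ▸ hz.1), hz.2⟩)
      · exact inter_ge (subset_insert _ _) heaf (by rw [card_erase_of_mem hae, hec])
      · intro z hz
        rw [mem_erase] at hz
        rcases hPsub z hz.2 with rfl | hze | rfl
        · exact absurd rfl hz.1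
        · exact mem_union_left _ (heaf (mem_erase.mpr ⟨fun hh => hap (hh ▸ hz.2), hze⟩))
        · exact mem_union_right _ (mem_insert_self _ _)
    · -- s_a ∉ E
      have hsxb : insert c (e.erase xb) ∈ E := by
        rcases hFY a hae xb hxbe haxb with h | h
        · exact absurd h hsa
        · exact h
      have hTc := hcard_T xb hxbe
      have hpTx := hpT xb hxbp
      have hpne : p ≠ insert c (e.erase xb) := fun hh => hvs xb (hh ▸ hvp)
      by_cases hq0 : insert v (e.erase xb) ∈ E
      · refine ⟨_, hq0, mem_insert_self _ _,
          invH_q0 hec he hef hae heaf hxbe (Ne.symm haxb), ?_⟩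
        exact reach_amb hTc hpTx (hq0subT xb) hp hq0 hpc (hcard_q0 xb hxbe) hvp
          (mem_insert_self _ _)
      · have hpex : 0 < (p ∩ e).card := by omega
        obtain ⟨x, hx⟩ := card_pos.mp hpex
        rw [mem_inter] at hx
        obtain ⟨hxp, hxe⟩ := hx
        have hxa : x ≠ a := fun hh => hap (hh ▸ hxp)
        have hxxb : x ≠ xb := fun hh => hxbp (hh ▸ hxp)
        have hsx : insert c (e.erase x) ∈ E := by
          rcases hFY a hae x hxe (Ne.symm hxa) with h | h
          · exact absurd h hsa
          · exact h
        have hhx : insert v (insert c ((e.erase xb).erase x)) ∈ E := by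
          rcases lemF hℓ hunif hdisp hTc hp hsxb hpne hpTx (subset_insert _ _)
            (hq0subT xb) (hq1subT xb x) (hcard_q0 xb hxbe)
            (hcard_h xb hxbe x (mem_erase.mpr ⟨hxxb, hxe⟩)) (hq0q1ne xb x) with h | h
          · exact absurd h hq0
          · exact h
        have hT'c := hcard_T x hxe
        have hhxT' := hswapsub xb x
        have hsxhx_ne : insert c (e.erase x) ≠ insert v (insert c ((e.erase x).erase a)) :=
          fun hh => hvs x (hh ▸ mem_insert_self v _)
        by_cases hq0' : insert v (e.erase x) ∈ E
        · refine ⟨_, hq0', mem_insert_self _ _,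
            invH_q0 hec he hef hae heaf hxe hxa, ?_⟩
          refine (reach_amb hTc hpTx (hq1subT xb x) hp hhx hpc
            (hcard_h xb hxbe x (mem_erase.mpr ⟨hxxb, hxe⟩)) hvp (mem_insert_self _ _)).trans ?_
          exact reach_amb hT'c hhxT' (hq0subT x) hhx hq0'
            (hcard_h xb hxbe x (mem_erase.mpr ⟨hxxb, hxe⟩)) (hcard_q0 x hxe)
            (mem_insert_self _ _) (mem_insert_self _ _)
        · have hqhat : insert v (insert c ((e.erase x).erase a)) ∈ E := by
            rcases lemF hℓ hunif hdisp hT'c hsx hhx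
              (fun hh => hvs x (by rw [hh]; exact mem_insert_self v _)) (subset_insert _ _)
              hhxT' (hq0subT x) (hq1subT x a) (hcard_q0 x hxe)
              (hcard_h x hxe a (mem_erase.mpr ⟨Ne.symm hxa, hae⟩)) (hq0q1ne x a) with h | h
            · exact absurd h hq0'
            · exact h
          have hNc := hcard_T a hae
          have hpN := hpT a hap
          have hqhatN := hswapsub x a
          have hpqhat_ne : p ≠ insert v (insert c ((e.erase x).erase a)) := by
            intro hh
            have hxin : x ∈ insert v (insert c ((e.erase x).erase a)) := hh ▸ hxp
            rcases mem_insert.mp hxin with h | h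
            · exact hve (h ▸ hxe)
            rcases mem_insert.mp h with h | h
            · exact hce (h ▸ hxe)
            · exact (notMem_erase x e) (mem_of_mem_erase h)
          have hqf : insert v (e.erase a) ∈ E := by
            rcases lemF hℓ hunif hdisp hNc hp hqhat hpqhat_ne hpN hqhatN
              (subset_insert _ _) (hq0subT a) (hcard_s a hae) (hcard_q0 a hae)
              (fun hh => hvs a (hh ▸ mem_insert_self v _)) with h | h
            · exact absurd h hsa
            · exact h
          refine ⟨_, hqf, mem_insert_self _ _, invH_qf hec he hef hae heaf, ?_⟩
          exact reach_amb hNc hpN (hq0subT a) hp hqf hpc (hcard_q0 a hae) hvp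
            (mem_insert_self _ _)


private def WInv (ℓ : ℕ) (E : Finset (Finset V)) (v : V) (e p : Finset V) : Prop :=
  p ∈ E ∧ v ∈ p ∧ ((v ∈ e ∧ p = e) ∨ (v ∉ e ∧ InvH ℓ E v e p))

private lemma stepInv {ℓ : ℕ} (hℓ : 3 ≤ ℓ) {E : Finset (Finset V)} {v : V}
    (hunif : ∀ e ∈ E, e.card = ℓ) (hdisp : Disperse ℓ E) {e0 e1 p : Finset V}
    (he0 : e0 ∈ E) (he1 : e1 ∈ E) (hR : ℓ - 1 ≤ (e0 ∩ e1).card) (hI : WInv ℓ E v e0 p) :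
    ∃ p', WInv ℓ E v e1 p' ∧
      Relation.ReflTransGen (LAdj ℓ (linkEdges E v)) (p.erase v) (p'.erase v) := by
  obtain ⟨hp, hvp, hcase⟩ := hI
  by_cases hv1 : v ∈ e1
  · rcases hcase with ⟨hv0, rfl⟩ | ⟨hv0, hH⟩
    · refine ⟨e1, ⟨he1, hv1, Or.inl ⟨hv1, rfl⟩⟩, ?_⟩
      refine reach_single hp he1 hvp hv1 (W := (p ∩ e1).erase v)
        ((erase_subset _ _).trans inter_subset_left)
        ((erase_subset _ _).trans inter_subset_right) (notMem_erase _ _) ?_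
      rw [card_erase_of_mem (mem_inter.mpr ⟨hvp, hv1⟩)]
      omega
    · exact ⟨e1, ⟨he1, hv1, Or.inl ⟨hv1, rfl⟩⟩,
        stepD hℓ hunif hdisp he0 he1 hR hv0 hv1 hp hvp hH.1⟩
  · rcases hcase with ⟨hv0, rfl⟩ | ⟨hv0, hH⟩
    · refine ⟨p, ⟨hp, hvp, Or.inr ⟨hv1, ?_, p, hp, hR, ?_⟩⟩, .refl⟩
      · exact le_trans (by omega) hR
      · exact (erase_subset _ _).trans subset_union_right
    · obtain ⟨q, hq, hvq, hqH, hreach⟩ :=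
        stepC hℓ hunif hdisp he0 he1 hR hv0 hv1 hp hvp hH
      exact ⟨q, ⟨hq, hvq, Or.inr ⟨hv1, hqH⟩⟩, hreach⟩

private lemma walkInv {ℓ : ℕ} (hℓ : 3 ≤ ℓ) {E : Finset (Finset V)} {v : V}
    (hunif : ∀ e ∈ E, e.card = ℓ) (hdisp : Disperse ℓ E) :
    ∀ (es : List (Finset V)) (hne : es ≠ []) (_ : ∀ e ∈ es, e ∈ E)
      (_ : es.Chain' (fun a b => ℓ - 1 ≤ (a ∩ b).card)) (p : Finset V)
      (_ : WInv ℓ E v (es.head hne) p),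
      ∃ q, WInv ℓ E v (es.getLast hne) q ∧
        Relation.ReflTransGen (LAdj ℓ (linkEdges E v)) (p.erase v) (q.erase v) := by
  intro es
  induction es with
  | nil => intro hne; exact absurd rfl hne
  | cons e0 t ih =>
    intro hne hall hch p hI
    cases t with
    | nil => exact ⟨p, hI, .refl⟩
    | cons e1 t' =>
      have hR : ℓ - 1 ≤ (e0 ∩ e1).card := (List.isChain_cons_cons.mp hch).1
      have hch' : List.Chain' _ (e1 :: t') := (List.isChain_cons_cons.mp hch).2
      obtain ⟨p', hI', hre⟩ := stepInv hℓ hunif hdisp (hall e0 (by simp))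
        (hall e1 (by simp)) hR hI
      obtain ⟨q, hIq, hre2⟩ := ih (List.cons_ne_nil _ _)
        (fun e he => hall e (List.mem_cons_of_mem _ he)) hch' p' hI'
      refine ⟨q, ?_, hre.trans hre2⟩
      have hgl : (e0 :: e1 :: t').getLast hne =
          (e1 :: t').getLast (List.cons_ne_nil _ _) := List.getLast_cons _
      rw [hgl]
      exact hIq

private lemma reach_tc {ℓ : ℕ} {L : Finset (Finset V)} {g g' : Finset V}
    (hr : Relation.ReflTransGen (LAdj ℓ L) g g') (hg : g ∈ L) :
    TightConn (ℓ - 1) L g g' := by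
  induction hr using Relation.ReflTransGen.head_induction_on with
  | refl =>
    refine ⟨[g'], List.cons_ne_nil _ _, ?_, List.isChain_singleton _, ?_, ?_⟩
    · intro x hx
      rw [List.mem_singleton] at hx
      subst hx
      exact hg
    · exact Finset.Subset.refl _
    · exact Finset.Subset.refl _
  | @head a c hadj htail ihh =>
    obtain ⟨es, hne, hmem, hch, hhead, hlast⟩ := ihh hadj.2.1
    refine ⟨a :: es, List.cons_ne_nil _ _, ?_, ?_, ?_, ?_⟩
    · intro x hx
      rcases List.mem_cons.mp hx with rfl | hx
      · exact hadj.1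
      · exact hmem x hx
    · refine List.isChain_cons.mpr ⟨?_, hch⟩
      intro y hy
      rw [List.head?_eq_head hne] at hy
      have hyy : y = es.head hne := by
        simpa using hy.symm
      subst hyy
      have h1 := hadj.2.2
      have h2 := card_le_card (inter_subset_inter (Finset.Subset.refl a) hhead)
      omega
    · exact Finset.Subset.refl _
    · rw [List.getLast_cons hne]
      exact hlast

private lemma tc_mono {k : ℕ} {L : Finset (Finset V)} {A B g g' : Finset V}
    (hA : A ⊆ g) (hB : B ⊆ g') (h : TightConn k L g g') : TightConn k L A B := by
  obtain ⟨es, hne, hmem, hch, hh, hl⟩ := h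
  exact ⟨es, hne, hmem, hch, hA.trans hh, hB.trans hl⟩

end Aux

theorem connected_in_link {V : Type*} [DecidableEq V] (ℓ : ℕ) (hℓ : 3 ≤ ℓ)
    (E : Finset (Finset V)) (hunif : ∀ e ∈ E, e.card = ℓ) (hdisp : Disperse ℓ E)
    (v : V) (A B : Finset V) (hvA : v ∉ A) (hvB : v ∉ B)
    (hAcard : A.card = ℓ - 2) (hBcard : B.card = ℓ - 2)
    (h : TightConn ℓ E (insert v A) (insert v B)) :
    TightConn (ℓ - 1) (linkEdges E v) A B := by
  obtain ⟨es, hne, hall, hch, hA, hB⟩ := h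
  have hv0 : v ∈ es.head hne := hA (mem_insert_self v A)
  have hvm : v ∈ es.getLast hne := hB (mem_insert_self v B)
  have h0E : es.head hne ∈ E := hall _ (List.head_mem hne)
  have hI0 : WInv ℓ E v (es.head hne) (es.head hne) := ⟨h0E, hv0, Or.inl ⟨hv0, rfl⟩⟩
  obtain ⟨q, hIq, hre⟩ := walkInv hℓ hunif hdisp es hne hall hch _ hI0
  obtain ⟨hqE, hvq, hcase⟩ := hIq
  have hqeq : q = es.getLast hne := by
    rcases hcase with ⟨_, h'⟩ | ⟨hnv, _⟩
    · exact h'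
    · exact absurd hvm hnv
  subst hqeq
  have hlink : (es.head hne).erase v ∈ linkEdges E v := mem_link h0E hv0
  have htc := reach_tc hre hlink
  refine tc_mono ?_ ?_ htc
  · intro z hz
    exact mem_erase.mpr ⟨fun hh => hvA (hh ▸ hz), hA (mem_insert_of_mem hz)⟩
  · intro z hz
    exact mem_erase.mpr ⟨fun hh => hvB (hh ▸ hz), hB (mem_insert_of_mem hz)⟩
end

section
/- Let G be a tightly connected disperse ℓ-uniform hypergraph (ℓ ≥ 3). Then for every vertex v, the link L(v) is tightly connected. -/
open Finset

/-!
Join two edges through `v` when they share `ℓ - 1` vertices. A tight walk in the link of `v` is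
a walk in this graph with `v` deleted, so it suffices to show that a nonempty set `C` of edges
through `v` that is closed under this adjacency contains every edge through `v`.

Call an edge anchored when some member of `C` meets it in `ℓ - 1` vertices. Anchoring does not
pass along a tight walk of `E`, but the weaker property that every `(ℓ - 1)`-subset of an edge
lies in an anchored edge does. The only nontrivial step concerns two edges `X.erase b` and
`X.erase a` of an `(ℓ + 1)`-set `X` avoiding `v`, the first anchored and the second not.
Dispersity says that an `(ℓ + 1)`-set containing two edges misses at most one of its
`ℓ`-subsets. Applied to the cones `insert v (X.erase x)`, whose `ℓ`-subsets through `v` are the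
facets `insert v ((X.erase x).erase y)`, it makes every `X.erase x` with `x ≠ a` an anchored edge.
This needs a third vertex of `X` besides `a` and `b`, whence `ℓ ≥ 3`.
-/

open Relation

namespace Finset

variable {α : Type*} [DecidableEq α] {s t u : Finset α} {a : α}

lemma exists_eq_erase_of_subset (hst : s ⊆ t) (h : #s + 1 = #t) : ∃ a ∈ t, s = t.erase a := by
  obtain ⟨a, ha, rfl⟩ := exists_eq_insert_iff.mpr ⟨hst, h⟩
  exact ⟨a, mem_insert_self a s, (erase_insert ha).symm⟩

lemma card_add_card_le_card_add_card_inter (hs : s ⊆ u) (ht : t ⊆ u) :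
    #s + #t ≤ #u + #(s ∩ t) := by
  rw [← card_union_add_card_inter]
  gcongr
  exact union_subset hs ht

lemma subset_insert_of_card_le_card_inter (has : a ∈ s) (hat : a ∉ t)
    (h : #s - 1 ≤ #(s ∩ t)) : s ⊆ insert a t := by
  have hsub : s ∩ t ⊆ s.erase a := fun x hx =>
    mem_erase.2 ⟨ne_of_mem_of_not_mem (mem_inter.1 hx).2 hat, (mem_inter.1 hx).1⟩
  have heq := eq_of_subset_of_card_le hsub (by rwa [card_erase_of_mem has])
  rw [← insert_erase has, ← heq]
  exact insert_subset_insert a inter_subset_right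

end Finset

def TightStep {V : Type*} [DecidableEq V] (k : ℕ) (E : Finset (Finset V)) (e f : Finset V) :
    Prop :=
  f ∈ E ∧ k - 1 ≤ #(e ∩ f)

lemma tightConn_iff_reflTransGen {V : Type*} [DecidableEq V] {k : ℕ} {E : Finset (Finset V)}
    {A B : Finset V} :
    TightConn k E A B ↔
      ∃ e ∈ E, ∃ f ∈ E, A ⊆ e ∧ B ⊆ f ∧ ReflTransGen (TightStep k E) e f := by
  constructor
  · rintro ⟨es, hne, hE, hchain, hA, hB⟩
    refine ⟨_, hE _ (List.head_mem hne), _, hE _ (List.getLast_mem hne), hA, hB, ?_⟩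
    exact List.relationReflTransGen_of_exists_isChain es
      (List.IsChain.imp_of_mem_imp (fun _ b _ hb h => ⟨hE b hb, h⟩) hchain) hne
  · rintro ⟨e, he, f, -, hA, hB, h⟩
    obtain ⟨es, hne, hchain, rfl, rfl⟩ := List.exists_isChain_ne_nil_of_relationReflTransGen h
    exact ⟨es, hne, hchain.induction _ _ (fun _ _ h _ => h.1) (fun _ => he),
      hchain.imp fun _ _ h => h.2, hA, hB⟩

section Link

variable {V : Type*} [DecidableEq V] {ℓ : ℕ} {E : Finset (Finset V)} {v : V}

lemma Disperse.erase_mem (hdisp : Disperse ℓ E) (hunif : ∀ e ∈ E, #e = ℓ) {X e f : Finset V}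
    (hX : #X = ℓ + 1) (he : e ∈ E) (hf : f ∈ E) (hef : e ≠ f) (heX : e ⊆ X)
    (hfX : f ⊆ X) {p q : V} (hp : p ∈ X) (hq : q ∈ X) (hpq : p ≠ q)
    (hpE : X.erase p ∉ E) : X.erase q ∈ E := by
  by_contra hqE
  have hpair : 2 ≤ #(E.filter (· ⊆ X)) := card_pair hef ▸
    card_le_card (by simp [insert_subset_iff, he, hf, heX, hfX])
  have hlarge : ℓ ≤ #(E.filter (· ⊆ X)) := by
    rcases hdisp X hX with h | h | h | h <;> omega
  have hsmall : E.filter (· ⊆ X) ⊆ ((X.erase p).erase q).image X.erase := by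
    intro g hg
    obtain ⟨hgE, hgX⟩ := mem_filter.1 hg
    obtain ⟨x, hx, rfl⟩ := exists_eq_erase_of_subset hgX (by rw [hunif g hgE, hX])
    refine mem_image_of_mem _ (mem_erase.2 ⟨?_, mem_erase.2 ⟨?_, hx⟩⟩) <;>
      rintro rfl <;> contradiction
  have := (card_le_card hsmall).trans card_image_le
  rw [card_erase_of_mem (mem_erase.2 ⟨hpq.symm, hq⟩), card_erase_of_mem hp, hX] at this
  omega

lemma Disperse.erase_mem_of_cone (hdisp : Disperse ℓ E) (hunif : ∀ e ∈ E, #e = ℓ)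
    (hℓ : 3 ≤ ℓ) {X : Finset V} (hX : #X = ℓ + 1) (hvX : v ∉ X) {a b : V} (ha : a ∈ X)
    (hb : b ∈ X) (hab : a ≠ b) (hXa : X.erase a ∈ E) (hXb : X.erase b ∈ E)
    (hcone : ∀ t ∈ X, t ≠ a → t ≠ b →
      insert v ((X.erase b).erase t) ∈ E ∧ insert v ((X.erase a).erase t) ∉ E)
    {t : V} (ht : t ∈ X) (hta : t ≠ a) (htb : t ≠ b) : X.erase t ∈ E := by
  by_contra hXt
  have hva : v ≠ a := fun h => hvX (h ▸ ha)
  have hvt : v ≠ t := fun h => hvX (h ▸ ht)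
  have hZ : ∀ x ∈ X, #(insert v (X.erase x)) = ℓ + 1 := fun x hx => by
    rw [card_insert_of_notMem (fun h => hvX (mem_of_mem_erase h)), card_erase_of_mem hx, hX]
    rfl
  have hmemZ : ∀ {x y}, x ∈ X → x ≠ y → x ∈ insert v (X.erase y) := fun hx hxy =>
    mem_insert_of_mem (mem_erase.2 ⟨hxy, hx⟩)
  have hfacet : ∀ x y, insert v ((X.erase x).erase y) ⊆ insert v (X.erase y) := fun x y => by
    rw [erase_right_comm]
    exact insert_subset_insert v (erase_subset _ _)
  obtain ⟨s, hs⟩ : (((X.erase a).erase b).erase t).Nonempty := by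
    rw [← card_pos, card_erase_of_mem (mem_erase.2 ⟨htb, mem_erase.2 ⟨hta, ht⟩⟩),
      card_erase_of_mem (mem_erase.2 ⟨hab.symm, hb⟩), card_erase_of_mem ha, hX]
    omega
  simp only [mem_erase] at hs
  obtain ⟨hst, hsb, hsa, hs⟩ := hs
  have hXs : X.erase s ∈ E :=
    hdisp.erase_mem hunif hX hXa hXb (by rwa [Ne, erase_inj X ha]) (erase_subset a X)
      (erase_subset b X) ht hs (Ne.symm hst) hXt
  -- the cone over `X.erase s` has the edge `X.erase s` and the facet without `b`, but misses
  -- the facet without `a`, so it has the facet without `t`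
  have hWst : insert v ((X.erase s).erase t) ∈ E := by
    have := hdisp.erase_mem hunif (hZ s hs) (hcone s hs hsa hsb).1 hXs
      (fun h => hvX (mem_of_mem_erase (h ▸ mem_insert_self v _))) (hfacet b s)
      (subset_insert v _) (hmemZ ha hsa.symm) (hmemZ ht hst.symm) hta.symm
      (by rw [erase_insert_of_ne hva, erase_right_comm]; exact (hcone s hs hsa hsb).2)
    rwa [erase_insert_of_ne hvt] at this
  have hbW : b ∈ insert v ((X.erase s).erase t) :=
    mem_insert_of_mem (mem_erase.2 ⟨htb.symm, mem_erase.2 ⟨hsb.symm, hb⟩⟩)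
  have hne : insert v ((X.erase b).erase t) ≠ insert v ((X.erase s).erase t) := by
    intro h
    rw [← h, mem_insert] at hbW
    rcases hbW with hbv | hbW
    · exact hvX (hbv ▸ hb)
    · exact notMem_erase b X (mem_of_mem_erase hbW)
  -- the cone over `X.erase t` has the facets without `b` and `s`, so it cannot miss both
  -- `X.erase t` and the facet without `a`
  refine (hcone t ht hta htb).2 ?_
  have := hdisp.erase_mem hunif (hZ t ht) (hcone t ht hta htb).1 hWst hne (hfacet b t)
    (hfacet s t) (mem_insert_self v _) (hmemZ ha hta.symm) hva
    (by rw [erase_insert (fun h => hvX (mem_of_mem_erase h))]; exact hXt)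
  rwa [erase_insert_of_ne hva, erase_right_comm] at this

lemma erase_mem_linkEdges {e : Finset V} (he : e ∈ E) (hv : v ∈ e) :
    e.erase v ∈ linkEdges E v :=
  mem_image_of_mem _ (mem_filter.2 ⟨he, hv⟩)

structure IsLinkClosed (ℓ : ℕ) (E : Finset (Finset V)) (v : V) (C : Set (Finset V)) : Prop where
  mem_edges : ∀ h ∈ C, h ∈ E
  vertex_mem : ∀ h ∈ C, v ∈ h
  mem_of_card_inter : ∀ h ∈ C, ∀ h' ∈ E, v ∈ h' → ℓ - 1 ≤ #(h ∩ h') → h' ∈ C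

def AnchoredIn (ℓ : ℕ) (C : Set (Finset V)) (f : Finset V) : Prop :=
  ∃ h ∈ C, ℓ - 1 ≤ #(h ∩ f)

def ShadowAnchored (ℓ : ℕ) (E : Finset (Finset V)) (C : Set (Finset V)) (e : Finset V) : Prop :=
  ∀ S ⊆ e, #S = ℓ - 1 → ∃ f ∈ E, S ⊆ f ∧ AnchoredIn ℓ C f

lemma isLinkClosed_setOf_reflTransGen (g : Finset V) :
    IsLinkClosed ℓ E v {h | h ∈ E ∧ v ∈ h ∧
      ReflTransGen (TightStep (ℓ - 1) (linkEdges E v)) (g.erase v) (h.erase v)} where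
  mem_edges _ hh := hh.1
  vertex_mem _ hh := hh.2.1
  mem_of_card_inter h hh h' hh' hvh' hcard := by
    refine ⟨hh', hvh', hh.2.2.tail ⟨erase_mem_linkEdges hh' hvh', ?_⟩⟩
    have hsub : (h ∩ h').erase v ⊆ h.erase v ∩ h'.erase v := by
      intro x hx
      simp only [mem_erase, mem_inter] at hx ⊢
      tauto
    have := (pred_card_le_card_erase (s := h ∩ h') (a := v)).trans (card_le_card hsub)
    omega

namespace IsLinkClosed

variable {C : Set (Finset V)}

lemma mem_of_subset (hC : IsLinkClosed ℓ E v C) (hunif : ∀ e ∈ E, #e = ℓ)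
    {Y h h' : Finset V} (hY : #Y = ℓ + 1) (hh : h ∈ C) (hhY : h ⊆ Y)
    (hh' : h' ∈ E) (hvh' : v ∈ h') (hh'Y : h' ⊆ Y) : h' ∈ C := by
  refine hC.mem_of_card_inter h hh h' hh' hvh' ?_
  have := card_add_card_le_card_add_card_inter hhY hh'Y
  rw [hunif h (hC.mem_edges h hh), hunif h' hh', hY] at this
  omega

lemma anchoredIn_of_subset_insert (hC : IsLinkClosed ℓ E v C) (hunif : ∀ e ∈ E, #e = ℓ)
    {h f : Finset V} (hh : h ∈ C) (hhf : h ⊆ insert v f) : AnchoredIn ℓ C f := by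
  refine ⟨h, hh, ?_⟩
  have hsub : h.erase v ⊆ h ∩ f := fun x hx =>
    mem_inter.2 ⟨mem_of_mem_erase hx,
      (mem_insert.1 (hhf (mem_of_mem_erase hx))).resolve_left (ne_of_mem_erase hx)⟩
  have := card_le_card hsub
  rwa [card_erase_of_mem (hC.vertex_mem h hh), hunif h (hC.mem_edges h hh)] at this

lemma subset_insert_of_anchor (hC : IsLinkClosed ℓ E v C) (hunif : ∀ e ∈ E, #e = ℓ)
    {h f : Finset V} (hh : h ∈ C) (hvf : v ∉ f) (hhf : ℓ - 1 ≤ #(h ∩ f)) :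
    h ⊆ insert v f :=
  subset_insert_of_card_le_card_inter (hC.vertex_mem h hh) hvf
    (by rwa [hunif h (hC.mem_edges h hh)])

lemma mem_of_anchoredIn (hC : IsLinkClosed ℓ E v C) (hunif : ∀ e ∈ E, #e = ℓ)
    {f h' : Finset V} (hf : #f = ℓ) (hvf : v ∉ f) (hanc : AnchoredIn ℓ C f)
    (hh' : h' ∈ E) (hvh' : v ∈ h') (hh'f : h' ⊆ insert v f) : h' ∈ C := by
  obtain ⟨h, hh, hhf⟩ := hanc
  exact hC.mem_of_subset hunif (by rw [card_insert_of_notMem hvf, hf]) hh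
    (hC.subset_insert_of_anchor hunif hh hvf hhf) hh' hvh' hh'f

lemma mem_of_common_anchor (hC : IsLinkClosed ℓ E v C) (hunif : ∀ e ∈ E, #e = ℓ)
    {h h' f : Finset V} (hh : h ∈ C) (hf : f ∈ E) (hhf : ℓ - 1 ≤ #(h ∩ f))
    (hh' : h' ∈ E) (hvh' : v ∈ h') (hh'f : ℓ - 1 ≤ #(h' ∩ f)) : h' ∈ C := by
  by_cases hvf : v ∈ f
  · exact hC.mem_of_card_inter f (hC.mem_of_card_inter h hh f hf hvf hhf) h' hh' hvh'
      (by rwa [inter_comm])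
  · exact hC.mem_of_anchoredIn hunif (hunif f hf) hvf ⟨h, hh, hhf⟩ hh' hvh'
      (subset_insert_of_card_le_card_inter hvh' hvf (by rwa [hunif h' hh']))

lemma mem_facet_and_notMem_facet (hC : IsLinkClosed ℓ E v C) (hunif : ∀ e ∈ E, #e = ℓ)
    (hdisp : Disperse ℓ E)
    {X : Finset V} (hX : #X = ℓ + 1) (hvX : v ∉ X) {a b : V} (ha : a ∈ X) (hb : b ∈ X)
    (hab : a ≠ b) (hXb : X.erase b ∈ E) (hanc : AnchoredIn ℓ C (X.erase b))
    (hnanc : ¬ AnchoredIn ℓ C (X.erase a)) {t : V} (ht : t ∈ X) (hta : t ≠ a)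
    (htb : t ≠ b) :
    insert v ((X.erase b).erase t) ∈ C ∧ insert v ((X.erase a).erase t) ∉ E := by
  have hvX' : ∀ x, v ∉ X.erase x := fun x h => hvX (mem_of_mem_erase h)
  have hvne : ∀ {x}, x ∈ X → v ≠ x := fun hx hvx => hvX (hvx ▸ hx)
  have hfacet : ∀ x y, insert v ((X.erase x).erase y) ⊆ insert v (X.erase x) := fun x y =>
    insert_subset_insert v (erase_subset _ _)
  have hjoin : ∀ {x} y, x ∈ X → AnchoredIn ℓ C (X.erase x) →
      insert v ((X.erase x).erase y) ∈ E → insert v ((X.erase x).erase y) ∈ C :=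
    fun {x} y hx hanc hW => hC.mem_of_anchoredIn hunif
      (by rw [card_erase_of_mem hx, hX]; rfl) (hvX' x) hanc hW (mem_insert_self v _) (hfacet x y)
  have hanchor : ∀ x y, insert v ((X.erase x).erase y) ∈ C → AnchoredIn ℓ C (X.erase x) :=
    fun x y hW => hC.anchoredIn_of_subset_insert hunif hW (hfacet x y)
  have hWab : insert v ((X.erase b).erase a) ∉ E := fun hW =>
    hnanc (hanchor a b (by rw [erase_right_comm]; exact hjoin a hb hanc hW))
  -- the cone over `X.erase b` has the edge `X.erase b` and a member of `C`, but misses the facet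
  -- without `a`
  have hWbt : insert v ((X.erase b).erase t) ∈ C := by
    obtain ⟨h, hh, hhb⟩ := hanc
    refine hjoin t hb ⟨h, hh, hhb⟩ ?_
    have := hdisp.erase_mem hunif
      (by rw [card_insert_of_notMem (hvX' b), card_erase_of_mem hb, hX]; rfl)
      (hC.mem_edges h hh) hXb (fun e => hvX' b (e ▸ hC.vertex_mem h hh))
      (hC.subset_insert_of_anchor hunif hh (hvX' b) hhb) (subset_insert v _)
      (mem_insert_of_mem (mem_erase.2 ⟨hab, ha⟩))
      (mem_insert_of_mem (mem_erase.2 ⟨htb, ht⟩))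
      hta.symm (by rw [erase_insert_of_ne (hvne ha)]; exact hWab)
    rwa [erase_insert_of_ne (hvne ht)] at this
  refine ⟨hWbt, fun hWat => hnanc (hanchor a t ?_)⟩
  rw [erase_right_comm]
  exact hjoin a ht (hanchor t b (by rw [erase_right_comm]; exact hWbt))
    (by rw [erase_right_comm]; exact hWat)

lemma shadowAnchored_erase (hC : IsLinkClosed ℓ E v C) (hunif : ∀ e ∈ E, #e = ℓ)
    (hdisp : Disperse ℓ E) (hℓ : 3 ≤ ℓ)
    {X : Finset V} (hX : #X = ℓ + 1) (hvX : v ∉ X) {a b : V} (ha : a ∈ X) (hb : b ∈ X)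
    (hab : a ≠ b) (hXa : X.erase a ∈ E) (hXb : X.erase b ∈ E)
    (hanc : AnchoredIn ℓ C (X.erase b)) (hnanc : ¬ AnchoredIn ℓ C (X.erase a)) :
    ShadowAnchored ℓ E C (X.erase a) := by
  have hcone := fun t (ht : t ∈ X) =>
    hC.mem_facet_and_notMem_facet hunif hdisp hX hvX ha hb hab hXb hanc hnanc ht
  intro S hS hScard
  obtain ⟨x, hx, rfl⟩ := exists_eq_erase_of_subset hS
    (by rw [hScard, card_erase_of_mem ha, hX]; omega)
  obtain ⟨hxa, hxX⟩ := mem_erase.1 hx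
  have hsub : (X.erase a).erase x ⊆ X.erase x := by
    rw [erase_right_comm]
    exact erase_subset _ _
  rcases eq_or_ne x b with rfl | hxb
  · exact ⟨X.erase x, hXb, hsub, hanc⟩
  refine ⟨X.erase x, ?_, hsub,
    hC.anchoredIn_of_subset_insert hunif (hcone x hxX hxa hxb).1 ?_⟩
  · exact hdisp.erase_mem_of_cone hunif hℓ hX hvX ha hb hab hXa hXb
      (fun t ht hta htb => ⟨hC.mem_edges _ (hcone t ht hta htb).1, (hcone t ht hta htb).2⟩)
      hxX hxa hxb
  · rw [erase_right_comm]
    exact insert_subset_insert v (erase_subset _ _)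

lemma shadowAnchored_of_anchoredIn (hC : IsLinkClosed ℓ E v C) (hunif : ∀ e ∈ E, #e = ℓ)
    (hdisp : Disperse ℓ E) (hℓ : 3 ≤ ℓ) {f e : Finset V} (hf : f ∈ E) (he : e ∈ E)
    (hfe : ℓ - 1 ≤ #(f ∩ e)) (hanc : AnchoredIn ℓ C f) : ShadowAnchored ℓ E C e := by
  by_cases he_anc : AnchoredIn ℓ C e
  · exact fun S hS _ => ⟨e, he, hS, he_anc⟩
  obtain ⟨h, hh, hhf⟩ := hanc
  have hvf : v ∉ f := fun hvf => he_anc ⟨f, hC.mem_of_card_inter h hh f hf hvf hhf, hfe⟩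
  have hve : v ∉ e := fun hve => he_anc
    ⟨e, hC.mem_of_common_anchor hunif hh hf hhf he hve (by rwa [inter_comm]),
      by rw [inter_self, hunif e he]; omega⟩
  have hne : f ≠ e := by
    rintro rfl
    exact he_anc ⟨h, hh, hhf⟩
  have hinter : #(f ∩ e) < ℓ := hunif f hf ▸ card_lt_card (Finset.ssubset_iff_subset_ne.2
    ⟨inter_subset_left, fun h => hne (eq_of_subset_of_card_le (inter_eq_left.1 h)
      (by rw [hunif e he, hunif f hf]))⟩)
  have hX : #(f ∪ e) = ℓ + 1 := by
    have := card_union_add_card_inter f e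
    rw [hunif f hf, hunif e he] at this
    omega
  obtain ⟨b, hb, hfb⟩ := exists_eq_erase_of_subset subset_union_left (by rw [hunif f hf, hX])
  obtain ⟨a, ha, hea⟩ := exists_eq_erase_of_subset subset_union_right (by rw [hunif e he, hX])
  have hab : a ≠ b := by
    rintro rfl
    exact hne (hfb.trans hea.symm)
  have key := hC.shadowAnchored_erase hunif hdisp hℓ hX
    (by simp only [mem_union, not_or]; exact ⟨hvf, hve⟩) ha hb hab (hea ▸ he) (hfb ▸ hf)
    (hfb ▸ ⟨h, hh, hhf⟩) (hea ▸ he_anc)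
  rwa [← hea] at key

lemma shadowAnchored_of_tightStep (hC : IsLinkClosed ℓ E v C) (hunif : ∀ e ∈ E, #e = ℓ)
    (hdisp : Disperse ℓ E) (hℓ : 3 ≤ ℓ) {e e' : Finset V} (hstep : TightStep ℓ E e e')
    (he : ShadowAnchored ℓ E C e) : ShadowAnchored ℓ E C e' := by
  obtain ⟨S, hS, hScard⟩ := exists_subset_card_eq hstep.2
  obtain ⟨f, hf, hSf, hanc⟩ := he S (hS.trans inter_subset_left) hScard
  exact hC.shadowAnchored_of_anchoredIn hunif hdisp hℓ hf hstep.1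
    (hScard ▸ card_le_card (subset_inter hSf (hS.trans inter_subset_right))) hanc

theorem mem_of_tightConn (hC : IsLinkClosed ℓ E v C) (hunif : ∀ e ∈ E, #e = ℓ)
    (hdisp : Disperse ℓ E) (hℓ : 3 ≤ ℓ)
    (hconn : ∀ A B : Finset V, #A = ℓ - 1 → #B = ℓ - 1 → TightConn ℓ E A B)
    {g g' : Finset V} (hg : g ∈ C) (hg' : g' ∈ E) (hvg' : v ∈ g') : g' ∈ C := by
  have hcard : ∀ h ∈ E, v ∈ h → #(h.erase v) = ℓ - 1 := fun h hh hvh => by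
    rw [card_erase_of_mem hvh, hunif h hh]
  have hgE := hC.mem_edges g hg
  obtain ⟨e, he, f, -, hge, hg'f, hwalk⟩ := tightConn_iff_reflTransGen.1
    (hconn _ _ (hcard g hgE (hC.vertex_mem g hg)) (hcard g' hg' hvg'))
  have hshadow : ShadowAnchored ℓ E C f := by
    clear hg'f
    induction hwalk with
    | refl =>
      refine fun S hS _ => ⟨e, he, hS, g, hg, ?_⟩
      rw [← hcard g hgE (hC.vertex_mem g hg)]
      exact card_le_card (subset_inter (erase_subset v g) hge)
    | tail _ hstep ih => exact hC.shadowAnchored_of_tightStep hunif hdisp hℓ hstep ih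
  obtain ⟨f', hf', hsub, h, hh, hhf'⟩ := hshadow _ hg'f (hcard g' hg' hvg')
  refine hC.mem_of_common_anchor hunif hh hf' hhf' hg' hvg' ?_
  rw [← hcard g' hg' hvg']
  exact card_le_card (subset_inter (erase_subset v g') hsub)

end IsLinkClosed

end Link

theorem links_are_tightly_connected_general {V : Type*} [DecidableEq V]
    (ℓ : ℕ) (hℓ : 3 ≤ ℓ)
    (E : Finset (Finset V)) (hunif : ∀ e ∈ E, e.card = ℓ) (hdisp : Disperse ℓ E)
    (hconn : ∀ A B : Finset V, A.card = ℓ - 1 → B.card = ℓ - 1 → TightConn ℓ E A B)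
    (v : V) :
    ∀ A B : Finset V, v ∉ A → v ∉ B → A.card = ℓ - 2 → B.card = ℓ - 2 →
      TightConn (ℓ - 1) (linkEdges E v) A B := by
  intro A B hvA hvB hA hB
  have hcard : ∀ S : Finset V, v ∉ S → #S = ℓ - 2 → #(insert v S) = ℓ - 1 :=
    fun S hvS hS => by
      rw [card_insert_of_notMem hvS, hS]
      omega
  obtain ⟨e, he, f, hf, hAe, hBf, -⟩ :=
    tightConn_iff_reflTransGen.1 (hconn _ _ (hcard A hvA hA) (hcard B hvB hB))
  have hve := hAe (mem_insert_self v A)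
  have hfC := (isLinkClosed_setOf_reflTransGen e).mem_of_tightConn hunif hdisp hℓ hconn
    ⟨he, hve, .refl⟩ hf (hBf (mem_insert_self v B))
  exact tightConn_iff_reflTransGen.2 ⟨e.erase v, erase_mem_linkEdges he hve, f.erase v,
    erase_mem_linkEdges hf hfC.2.1, subset_erase.2 ⟨(subset_insert v A).trans hAe, hvA⟩,
    subset_erase.2 ⟨(subset_insert v B).trans hBf, hvB⟩, hfC.2.2⟩

theorem links_are_tightly_connected {V : Type*} [DecidableEq V] [Fintype V]
    (ℓ : ℕ) (hℓ : 3 ≤ ℓ)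
    (E : Finset (Finset V)) (hunif : ∀ e ∈ E, e.card = ℓ) (hdisp : Disperse ℓ E)
    (hconn : ∀ A B : Finset V, A.card = ℓ - 1 → B.card = ℓ - 1 → TightConn ℓ E A B)
    (v : V) :
    ∀ A B : Finset V, v ∉ A → v ∉ B → A.card = ℓ - 2 → B.card = ℓ - 2 →
      TightConn (ℓ - 1) (linkEdges E v) A B :=
  links_are_tightly_connected_general ℓ hℓ E hunif hdisp hconn v
end

section
/- Let G be a disperse 3-uniform hypergraph. Then for every vertex v, the link graph L(v) is a cograph, i.e., L(v) contains no induced path on 4 vertices. -/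
open Finset

lemma classify4 {V : Type*} [DecidableEq V] {w x y z : V}
    (hwx : w ≠ x) (hwy : w ≠ y) (hwz : w ≠ z) (hxy : x ≠ y) (hxz : x ≠ z) (hyz : y ≠ z)
    {e : Finset V} (he : e.card = 3) (hsub : e ⊆ ({w, x, y, z} : Finset V)) :
    e = {x, y, z} ∨ e = {w, y, z} ∨ e = {w, x, z} ∨ e = {w, x, y} := by
  have hX : ({w, x, y, z} : Finset V).card = 4 := by
    rw [card_insert_of_notMem (by simp [hwx, hwy, hwz]),
        card_insert_of_notMem (by simp [hxy, hxz]),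
        card_insert_of_notMem (by simp [hyz]), card_singleton]
  have h1 : (({w, x, y, z} : Finset V) \ e).card = 1 := by
    rw [card_sdiff_of_subset hsub, hX, he]
  obtain ⟨t, ht⟩ := card_eq_one.mp h1
  have hte : e = ({w, x, y, z} : Finset V) \ {t} := by
    rw [← ht, sdiff_sdiff_right_self, inf_eq_inter, inter_eq_right.mpr hsub]
  have htX : t ∈ ({w, x, y, z} : Finset V) := by
    have : t ∈ ({w, x, y, z} : Finset V) \ e := by rw [ht]; exact mem_singleton_self t
    exact (mem_sdiff.mp this).1
  rw [sdiff_singleton_eq_erase] at hte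
  simp only [mem_insert, mem_singleton] at htX
  rcases htX with rfl | rfl | rfl | rfl
  · left; rw [hte]; ext u
    simp only [mem_erase, mem_insert, mem_singleton]
    constructor
    · rintro ⟨hu, rfl | h⟩ <;> aesop
    · rintro (rfl | rfl | rfl) <;> aesop
  · right; left; rw [hte]; ext u
    simp only [mem_erase, mem_insert, mem_singleton]
    constructor
    · rintro ⟨hu, h⟩; tauto
    · rintro (rfl | rfl | rfl) <;> simp_all [Ne.symm]
  · right; right; left; rw [hte]; ext u
    simp only [mem_erase, mem_insert, mem_singleton]
    constructor
    · rintro ⟨hu, h⟩; tauto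
    · rintro (rfl | rfl | rfl) <;> simp_all [Ne.symm]
  · right; right; right; rw [hte]; ext u
    simp only [mem_erase, mem_insert, mem_singleton]
    constructor
    · rintro ⟨hu, h⟩; tauto
    · rintro (rfl | rfl | rfl) <;> simp_all [Ne.symm]

lemma card2_contra {V : Type*} [DecidableEq V] {E : Finset (Finset V)}
    (hdisp : Disperse 3 E) {X : Finset V} (hX : X.card = 4)
    {t1 t2 : Finset V} (h1 : t1 ∈ E) (h2 : t2 ∈ E) (h12 : t1 ≠ t2)
    (hs1 : t1 ⊆ X) (hs2 : t2 ⊆ X)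
    (hall : ∀ e ∈ E, e ⊆ X → e = t1 ∨ e = t2) : False := by
  have hF : E.filter (· ⊆ X) = {t1, t2} := by
    ext e
    simp only [mem_filter, mem_insert, mem_singleton]
    constructor
    · rintro ⟨he, hsub⟩; exact hall e he hsub
    · rintro (rfl | rfl) <;> exact ⟨by assumption, by assumption⟩
  have hc : (E.filter (· ⊆ X)).card = 2 := by
    rw [hF, card_insert_of_notMem (by simpa using h12), card_singleton]
  rcases hdisp X hX with h | h | h | h <;> omega

lemma card4 {V : Type*} [DecidableEq V] {w x y z : V}
    (hwx : w ≠ x) (hwy : w ≠ y) (hwz : w ≠ z) (hxy : x ≠ y) (hxz : x ≠ z) (hyz : y ≠ z) :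
    ({w, x, y, z} : Finset V).card = 4 := by
  rw [card_insert_of_notMem (by simp [hwx, hwy, hwz]),
      card_insert_of_notMem (by simp [hxy, hxz]),
      card_insert_of_notMem (by simp [hyz]), card_singleton]

set_option maxHeartbeats 1600000 in
theorem links_of_disperse_3graph_are_cographs {V : Type*} [DecidableEq V]
    (E : Finset (Finset V)) (hunif : ∀ e ∈ E, e.card = 3) (hdisp : Disperse 3 E)
    (v a b c d : V)
    (hab : a ≠ b) (hac : a ≠ c) (had : a ≠ d) (hbc : b ≠ c) (hbd : b ≠ d)
    (hcd : c ≠ d) (hav : a ≠ v) (hbv : b ≠ v) (hcv : c ≠ v) (hdv : d ≠ v) :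
    ¬ (({v, a, b} : Finset V) ∈ E ∧ ({v, b, c} : Finset V) ∈ E ∧
       ({v, c, d} : Finset V) ∈ E ∧ ({v, a, c} : Finset V) ∉ E ∧
       ({v, a, d} : Finset V) ∉ E ∧ ({v, b, d} : Finset V) ∉ E) := by
  rintro ⟨hvab, hvbc, hvcd, hvac, hvad, hvbd⟩
  have habc : ({a, b, c} : Finset V) ∈ E := by
    by_contra h
    refine card2_contra hdisp (card4 hav.symm hbv.symm hcv.symm hab hac hbc) hvab hvbc
      ?_ (by intro u hu; simp at hu ⊢; tauto) (by intro u hu; simp at hu ⊢; tauto) ?_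
    · intro heq
      have : a ∈ ({v, b, c} : Finset V) := by rw [← heq]; simp
      simp at this; tauto
    · intro e he hsub
      rcases classify4 hav.symm hbv.symm hcv.symm hab hac hbc (hunif e he) hsub with
        rfl | rfl | rfl | rfl
      · exact absurd he h
      · right; rfl
      · exact absurd he hvac
      · left; rfl
  have hbcd : ({b, c, d} : Finset V) ∈ E := by
    by_contra h
    refine card2_contra hdisp (card4 hbv.symm hcv.symm hdv.symm hbc hbd hcd) hvbc hvcd
      ?_ (by intro u hu; simp at hu ⊢; tauto) (by intro u hu; simp at hu ⊢; tauto) ?_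
    · intro heq
      have : b ∈ ({v, c, d} : Finset V) := by rw [← heq]; simp
      simp at this; tauto
    · intro e he hsub
      rcases classify4 hbv.symm hcv.symm hdv.symm hbc hbd hcd (hunif e he) hsub with
        rfl | rfl | rfl | rfl
      · exact absurd he h
      · right; rfl
      · exact absurd he hvbd
      · left; rfl
  have hacd : ({a, c, d} : Finset V) ∉ E := by
    intro h
    refine card2_contra hdisp (card4 hav.symm hcv.symm hdv.symm hac had hcd) h hvcd
      ?_ (by intro u hu; simp at hu ⊢; tauto) (by intro u hu; simp at hu ⊢; tauto) ?_
    · intro heq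
      have : v ∈ ({a, c, d} : Finset V) := by rw [heq]; simp
      simp at this; tauto
    · intro e he hsub
      rcases classify4 hav.symm hcv.symm hdv.symm hac had hcd (hunif e he) hsub with
        rfl | rfl | rfl | rfl
      · left; rfl
      · right; rfl
      · exact absurd he hvad
      · exact absurd he hvac
  have habd : ({a, b, d} : Finset V) ∉ E := by
    intro h
    refine card2_contra hdisp (card4 hav.symm hbv.symm hdv.symm hab had hbd) h hvab
      ?_ (by intro u hu; simp at hu ⊢; tauto) (by intro u hu; simp at hu ⊢; tauto) ?_
    · intro heq
      have : v ∈ ({a, b, d} : Finset V) := by rw [heq]; simp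
      simp at this; tauto
    · intro e he hsub
      rcases classify4 hav.symm hbv.symm hdv.symm hab had hbd (hunif e he) hsub with
        rfl | rfl | rfl | rfl
      · left; rfl
      · exact absurd he hvbd
      · exact absurd he hvad
      · right; rfl
  refine card2_contra hdisp (card4 hab hac had hbc hbd hcd) hbcd habc
    ?_ (by intro u hu; simp at hu ⊢; tauto) (by intro u hu; simp at hu ⊢; tauto) ?_
  · intro heq
    have : a ∈ ({b, c, d} : Finset V) := by rw [heq]; simp
    simp at this; tauto
  · intro e he hsub
    rcases classify4 hab hac had hbc hbd hcd (hunif e he) hsub with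
      rfl | rfl | rfl | rfl
    · left; rfl
    · exact absurd he hacd
    · exact absurd he habd
    · right; rfl
end

section
/- Let G be a disperse ℓ-uniform hypergraph (ℓ ≥ 3), and let A₁, A₂ ⊆ V(G) with |A₁| = |A₂| = ℓ−1 and |A₁ ∩ A₂| = ℓ−2. If there is a tight walk between A₁ and A₂ in G, then there is such a tight walk consisting of at most two edges. -/
open Finset

/-!
Write `S = A₁ ∩ A₂` and `Aᵢ = S ∪ {aᵢ}`; the claim is that `a₁` and `a₂` are at distance at most
two in the link graph of `S`. The engine is the dispersion dichotomy: an `(ℓ+1)`-set containing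
two edges misses at most one of its `ℓ`-subsets. In the link of an `(ℓ-3)`-set this says that two
triples sharing a pair force a triple through the complementary pair, and five such exchanges
shorten any path of length three in the link graph of an `(ℓ-2)`-set; this settles walks inside
the star of `S`. A general walk is pushed into the stars of ever larger `Z ⊆ S`, one vertex
`z ∈ S \ Z` at a time: along the walk, the `(ℓ-1)`-sets between `Z ∪ {z}` and `e ∪ {z}` stay
covered by the tight component, inside the star of `Z ∪ {z}`, of the first edge. When the walk
leaves `z`, keeping this invariant needs the statement for `Z ∪ {z}` itself.
-/

section

open Relation

variable {V : Type*} {ℓ : ℕ} {E : Finset (Finset V)}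

theorem mem_of_subset_of_card_le (hunif : ∀ e ∈ E, #e = ℓ) {e s : Finset V} (he : e ∈ E)
    (hs : s ⊆ e) (hcard : ℓ ≤ #s) : s ∈ E := by
  rwa [eq_of_subset_of_card_le hs (by rw [hunif e he]; exact hcard)]

variable [DecidableEq V]

theorem Disperse.erase_mem_or_erase_mem (hdisp : Disperse ℓ E) (hunif : ∀ e ∈ E, #e = ℓ)
    {X : Finset V} (hX : #X = ℓ + 1) {x y u v : V} (hx : x ∈ X) (hxy : x ≠ y)
    (hex : X.erase x ∈ E) (hey : X.erase y ∈ E) (hu : u ∈ X) (hv : v ∈ X) (huv : u ≠ v) :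
    X.erase u ∈ E ∨ X.erase v ∈ E := by
  by_contra! ⟨hue, hve⟩
  have herase_ne {a b : V} (ha : a ∈ X) (hab : a ≠ b) : X.erase a ≠ X.erase b :=
    fun h => hab ((erase_inj X ha).1 h)
  have hle : #(E.filter (· ⊆ X)) ≤ ℓ - 1 :=
    calc #(E.filter (· ⊆ X))
        ≤ #(((X.powersetCard ℓ).erase (X.erase u)).erase (X.erase v)) := by
          refine card_le_card fun e he => ?_
          rw [mem_filter] at he
          simp only [mem_erase, mem_powersetCard]
          exact ⟨fun h => hve (h ▸ he.1), fun h => hue (h ▸ he.1), he.2, hunif e he.1⟩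
      _ = ℓ - 1 := by
          have hmem {a : V} (ha : a ∈ X) : X.erase a ∈ X.powersetCard ℓ :=
            mem_powersetCard.2 ⟨erase_subset a X, by rw [card_erase_of_mem ha, hX]; rfl⟩
          rw [card_erase_of_mem (mem_erase.2 ⟨herase_ne hv huv.symm, hmem hv⟩),
            card_erase_of_mem (hmem hu), card_powersetCard, hX, Nat.choose_succ_self_right]
          omega
  have hge : 2 ≤ #(E.filter (· ⊆ X)) :=
    calc 2 = #{X.erase x, X.erase y} := (card_pair (herase_ne hx hxy)).symm
      _ ≤ #(E.filter (· ⊆ X)) := card_le_card <| by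
          simp [insert_subset_iff, hex, hey, erase_subset]
  rcases hdisp X hX with h | h | h | h <;> omega

theorem notMem_of_card_insert_insert_insert {Q : Finset V} {p q r : V}
    (h : #(insert p (insert q (insert r Q))) = #Q + 3) :
    p ∉ insert q (insert r Q) ∧ q ∉ insert r Q ∧ r ∉ Q := by
  grind [card_insert_eq_ite]

theorem Disperse.insert_mem_or_insert_mem (hdisp : Disperse ℓ E) (hunif : ∀ e ∈ E, #e = ℓ)
    {Q : Finset V} (hQ : #Q + 3 = ℓ) {p q r t : V} (hrt : r ≠ t)
    (hr : insert p (insert q (insert r Q)) ∈ E) (ht : insert p (insert q (insert t Q)) ∈ E) :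
    insert r (insert t (insert p Q)) ∈ E ∨ insert r (insert t (insert q Q)) ∈ E := by
  obtain ⟨hp, hq, hrQ⟩ := notMem_of_card_insert_insert_insert (by rw [hunif _ hr, hQ])
  obtain ⟨hp', hq', htQ⟩ := notMem_of_card_insert_insert_insert (by rw [hunif _ ht, hQ])
  set X := insert t (insert p (insert q (insert r Q)))
  have htX : t ∉ insert p (insert q (insert r Q)) := by grind
  have hX : #X = ℓ + 1 := by rw [card_insert_of_notMem htX, hunif _ hr]
  have key := hdisp.erase_mem_or_erase_mem hunif hX (x := t) (y := r) (u := q) (v := p)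
    (by grind) (by grind) (by rwa [erase_insert htX])
    (by convert ht using 1; ext a; simp only [X, mem_erase, mem_insert]; grind)
    (by grind) (by grind) (by grind)
  convert key using 2 <;> ext a <;> simp only [X, mem_erase, mem_insert] <;> grind

def TightAdj (ℓ : ℕ) (E : Finset (Finset V)) (e f : Finset V) : Prop :=
  e ∈ E ∧ f ∈ E ∧ ℓ - 1 ≤ #(e ∩ f)

instance : Std.Symm (TightAdj ℓ E) where
  symm _ _ h := ⟨h.2.1, h.1, by rw [inter_comm]; exact h.2.2⟩

theorem TightAdj.mem_of_reflTransGen {e f : Finset V} (h : ReflTransGen (TightAdj ℓ E) e f)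
    (he : e ∈ E) : f ∈ E := by
  induction h with
  | refl => exact he
  | tail _ hadj _ => exact hadj.2.1

theorem TightConn.exists_reflTransGen {A B : Finset V} (h : TightConn ℓ E A B) :
    ∃ e₁ e₂, e₁ ∈ E ∧ A ⊆ e₁ ∧ B ⊆ e₂ ∧ ReflTransGen (TightAdj ℓ E) e₁ e₂ := by
  obtain ⟨es, hne, hmem, hchain, hA, hB⟩ := h
  refine ⟨_, _, hmem _ (List.head_mem hne), hA, hB, ?_⟩
  exact List.relationReflTransGen_of_exists_isChain es
    (hchain.imp_of_mem_imp fun e f he hf hef => ⟨hmem e he, hmem f hf, hef⟩) hne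

/-- `a` and `b` are at distance at most two in the link graph of `S`, whose edges are the pairs
`uv` with `S ∪ {u, v} ∈ E`. -/
def LinkNear (E : Finset (Finset V)) (S : Finset V) (a b : V) : Prop :=
  insert a (insert b S) ∈ E ∨ ∃ c, insert a (insert c S) ∈ E ∧ insert c (insert b S) ∈ E

theorem Disperse.linkNear_of_path (hdisp : Disperse ℓ E) (hunif : ∀ e ∈ E, #e = ℓ)
    {S : Finset V} (hS : #S + 2 = ℓ) (hSne : S.Nonempty) {a c u b : V}
    (hac : insert a (insert c S) ∈ E) (hcu : insert c (insert u S) ∈ E)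
    (hub : insert u (insert b S) ∈ E) : LinkNear E S a b := by
  by_cases hau : a = u
  · exact .inl (hau ▸ hub)
  by_cases hcb : c = b
  · exact .inl (hcb ▸ hac)
  by_cases hab : a = b
  · exact .inr ⟨c, hac, by simpa only [hab, insert_comm] using hac⟩
  obtain ⟨s, hs⟩ := hSne
  obtain ⟨Q, hsQ, rfl⟩ : ∃ Q, s ∉ Q ∧ S = insert s Q :=
    ⟨S.erase s, notMem_erase s S, (insert_erase hs).symm⟩
  have hQ : #Q + 3 = ℓ := by rw [← hS, card_insert_of_notMem hsQ]
  have has : a ≠ s := by have := hunif _ hac; grind [card_insert_eq_ite]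
  have hbs : b ≠ s := by have := hunif _ hub; grind [card_insert_eq_ite]
  rcases hdisp.insert_mem_or_insert_mem hunif hQ (p := s) (q := c) hau
    (by simpa only [insert_comm] using hac) (by simpa only [insert_comm] using hcu) with hasu | hacu
  · exact .inr ⟨u, by simpa only [insert_comm] using hasu, hub⟩
  rcases hdisp.insert_mem_or_insert_mem hunif hQ (p := s) (q := u) hcb
    (by simpa only [insert_comm] using hcu) (by simpa only [insert_comm] using hub) with hcsb | hcub
  · exact .inr ⟨c, hac, by simpa only [insert_comm] using hcsb⟩
  rcases hdisp.insert_mem_or_insert_mem hunif hQ (p := c) (q := u) hab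
    (by simpa only [insert_comm] using hacu) (by simpa only [insert_comm] using hcub)
    with habc | habu
  · rcases hdisp.insert_mem_or_insert_mem hunif hQ (p := c) (q := a) hbs
      (by simpa only [insert_comm] using habc) (by simpa only [insert_comm] using hac)
      with hbsc | hbsa
    · exact .inr ⟨c, hac, by simpa only [insert_comm] using hbsc⟩
    · exact .inl (by simpa only [insert_comm] using hbsa)
  · rcases hdisp.insert_mem_or_insert_mem hunif hQ (p := u) (q := b) has
      (by simpa only [insert_comm] using habu) (by simpa only [insert_comm] using hub)
      with hasu | hasb
    · exact .inr ⟨u, by simpa only [insert_comm] using hasu, hub⟩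
    · exact .inl (by simpa only [insert_comm] using hasb)

theorem Disperse.linkNear_of_linkNear_of_mem (hdisp : Disperse ℓ E) (hunif : ∀ e ∈ E, #e = ℓ)
    {S : Finset V} (hS : #S + 2 = ℓ) (hSne : S.Nonempty) {a w x : V} (h : LinkNear E S a w)
    (hwx : insert w (insert x S) ∈ E) : LinkNear E S a x := by
  rcases h with haw | ⟨c, hac, hcw⟩
  · exact .inr ⟨w, haw, hwx⟩
  · exact hdisp.linkNear_of_path hunif hS hSne hac hcw hwx

theorem LinkNear.exists_edges (hunif : ∀ e ∈ E, #e = ℓ) {S : Finset V} (hS : #S + 2 = ℓ)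
    {a b : V} (h : LinkNear E S a b) :
    ∃ e₁ ∈ E, ∃ e₂ ∈ E, ℓ - 1 ≤ #(e₁ ∩ e₂) ∧ insert a S ⊆ e₁ ∧ insert b S ⊆ e₂ := by
  rcases h with hab | ⟨c, hac, hcb⟩
  · refine ⟨_, hab, _, hab, by rw [inter_self, hunif _ hab]; omega, ?_, ?_⟩ <;>
      intro y <;> simp only [mem_insert] <;> tauto
  · have hcS : c ∉ S := by have := hunif _ hac; grind [card_insert_eq_ite]
    refine ⟨_, hac, _, hcb, ?_, ?_, ?_⟩
    · calc ℓ - 1 = #(insert c S) := by rw [card_insert_of_notMem hcS]; omega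
        _ ≤ _ := card_le_card fun y => by simp only [mem_inter, mem_insert]; tauto
    all_goals intro y; simp only [mem_insert]; tauto

def LinkNearOfTightConn (ℓ : ℕ) (E : Finset (Finset V)) (Z : Finset V) : Prop :=
  ∀ ⦃S : Finset V⦄ ⦃a₁ a₂ : V⦄ ⦃e₁ e₂ : Finset V⦄, Z ⊆ S → #S + 2 = ℓ → a₁ ∉ S → a₂ ∉ S →
    a₁ ≠ a₂ → e₁ ∈ E → insert a₁ S ⊆ e₁ → insert a₂ S ⊆ e₂ →
    ReflTransGen (TightAdj ℓ (E.filter (Z ⊆ ·))) e₁ e₂ → LinkNear E S a₁ a₂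

theorem Disperse.linkNearOfTightConn_of_card (hdisp : Disperse ℓ E)
    (hunif : ∀ e ∈ E, #e = ℓ) (hℓ : 3 ≤ ℓ) {Z : Finset V} (hZ : #Z + 2 = ℓ) :
    LinkNearOfTightConn ℓ E Z := by
  intro S a₁ a₂ e₁ e₂ hZS hS ha₁ ha₂ ha₁₂ he₁ h₁ h₂ hconn
  obtain rfl : Z = S := eq_of_subset_of_card_le hZS (by omega)
  have hZne : Z.Nonempty := card_pos.1 (by omega)
  have hedge {e : Finset V} {w x : V} (he : e ∈ E) (hw : w ∈ e) (hx : x ∈ e) (hwZ : w ∉ Z)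
      (hxZ : x ∉ Z) (hwx : w ≠ x) (hZe : Z ⊆ e) : insert w (insert x Z) ∈ E :=
    mem_of_subset_of_card_le hunif he (insert_subset hw (insert_subset hx hZe)) <| by
      rw [card_insert_of_notMem (by simp [hwx, hwZ]), card_insert_of_notMem hxZ, hZ]
  suffices ∀ e, ReflTransGen (TightAdj ℓ (E.filter (Z ⊆ ·))) e₁ e →
      ∀ x ∈ e, x ∉ Z → x = a₁ ∨ LinkNear E Z a₁ x from
    (this e₂ hconn a₂ (h₂ (mem_insert_self _ _)) ha₂).resolve_left ha₁₂.symm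
  intro e he
  induction he with
  | refl =>
    intro x hx hxZ
    by_cases hxa : x = a₁
    · exact .inl hxa
    exact .inr (.inl (hedge he₁ (h₁ (mem_insert_self _ _)) hx ha₁ hxZ (Ne.symm hxa)
      ((subset_insert _ _).trans h₁)))
  | @tail e f _ hadj ih =>
    intro x hx hxZ
    by_cases hxe : x ∈ e
    · exact ih x hxe hxZ
    obtain ⟨he, hf, hef⟩ := hadj
    rw [mem_filter] at he hf
    obtain ⟨w, hw, hwZ⟩ := exists_mem_notMem_of_card_lt_card (s := Z) (t := e ∩ f) (by omega)
    rw [mem_inter] at hw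
    have hwx : insert w (insert x Z) ∈ E :=
      hedge hf.1 hw.2 hx hwZ hxZ (fun h => hxe (h ▸ hw.1)) hf.2
    rcases ih w hw.1 hwZ with rfl | hnear
    · exact .inr (.inl hwx)
    · exact .inr (hdisp.linkNear_of_linkNear_of_mem hunif hZ hZne hnear hwx)

theorem exists_eq_insert_insert_of_subset {Q F : Finset V} (hQF : Q ⊆ F) (hF : #F = #Q + 2) :
    ∃ a₁ a₂, F = insert a₁ (insert a₂ Q) := by
  obtain ⟨a₁, a₂, -, h⟩ := card_eq_two.1 (by rw [card_sdiff_of_subset hQF]; omega)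
  exact ⟨a₁, a₂, by rw [← sdiff_union_of_subset hQF, h, insert_union, singleton_union]⟩

def LinkCovered (ℓ : ℕ) (E : Finset (Finset V)) (W : Finset V) (z : V) (e₀ e : Finset V) :
    Prop :=
  ∀ T, W ⊆ T → T ⊆ insert z e → #T + 1 = ℓ →
    ∃ g, ReflTransGen (TightAdj ℓ (E.filter (W ⊆ ·))) e₀ g ∧ T ⊆ g

theorem reflTransGen_tail_of_subset {W e₀ f g D : Finset V} (he₀ : e₀ ∈ E.filter (W ⊆ ·))
    (hg : ReflTransGen (TightAdj ℓ (E.filter (W ⊆ ·))) e₀ g) (hf : f ∈ E) (hWf : W ⊆ f)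
    (hDg : D ⊆ g) (hDf : D ⊆ f) (hD : ℓ ≤ #D + 1) :
    ReflTransGen (TightAdj ℓ (E.filter (W ⊆ ·))) e₀ f :=
  hg.tail ⟨TightAdj.mem_of_reflTransGen hg he₀, mem_filter.2 ⟨hf, hWf⟩,
    (Nat.sub_le_of_le_add hD).trans (card_le_card (subset_inter hDg hDf))⟩

section LinkOfQ

variable {W Q : Finset V} {z : V} {e₀ : Finset V}

theorem reflTransGen_insert_of_subset (hunif : ∀ e ∈ E, #e = ℓ) (hQ : #Q + 3 = ℓ)
    (hWQ : W ⊆ insert z Q) (he₀ : e₀ ∈ E.filter (W ⊆ ·)) {g : Finset V} {w x : V}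
    (hg : ReflTransGen (TightAdj ℓ (E.filter (W ⊆ ·))) e₀ g) (hxg : insert z (insert x Q) ⊆ g)
    (hh : insert z (insert w (insert x Q)) ∈ E) :
    ReflTransGen (TightAdj ℓ (E.filter (W ⊆ ·))) e₀ (insert z (insert w (insert x Q))) := by
  obtain ⟨hz, -, hx⟩ := notMem_of_card_insert_insert_insert (by rw [hunif _ hh, hQ])
  refine reflTransGen_tail_of_subset he₀ hg hh (hWQ.trans fun y => by
    simp only [mem_insert]; tauto) hxg (fun y => by simp only [mem_insert]; tauto) ?_
  rw [card_insert_of_notMem (by grind), card_insert_of_notMem hx]; omega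

theorem Disperse.exists_reflTransGen_of_exchange (hdisp : Disperse ℓ E)
    (hunif : ∀ e ∈ E, #e = ℓ) (hQ : #Q + 3 = ℓ) (hWQ : W ⊆ insert z Q)
    (he₀ : e₀ ∈ E.filter (W ⊆ ·)) {x y β : V} (hβz : β ≠ z)
    (hN : ReflTransGen (TightAdj ℓ (E.filter (W ⊆ ·))) e₀ (insert z (insert x (insert y Q))))
    (hf : insert x (insert y (insert β Q)) ∈ E) :
    ∃ g, ReflTransGen (TightAdj ℓ (E.filter (W ⊆ ·))) e₀ g ∧ insert z (insert β Q) ⊆ g := by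
  have hNE := (mem_filter.1 (TightAdj.mem_of_reflTransGen hN he₀)).1
  rcases hdisp.insert_mem_or_insert_mem hunif hQ (p := x) (q := y) hβz.symm
    (by simpa only [insert_comm] using hNE) hf with h | h <;>
  exact ⟨_, reflTransGen_insert_of_subset hunif hQ hWQ he₀ hN
    (fun u => by simp only [mem_insert]; tauto) h, fun u => by simp only [mem_insert]; tauto⟩

theorem Disperse.exists_reflTransGen_of_linkNear (hdisp : Disperse ℓ E)
    (hunif : ∀ e ∈ E, #e = ℓ) (hQ : #Q + 3 = ℓ) (hWQ : W ⊆ insert z Q)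
    (he₀ : e₀ ∈ E.filter (W ⊆ ·)) {a₁ a₂ β : V} {g₁ g₂ : Finset V} (hβz : β ≠ z)
    (hf : insert a₁ (insert a₂ (insert β Q)) ∈ E)
    (hg₁ : ReflTransGen (TightAdj ℓ (E.filter (W ⊆ ·))) e₀ g₁)
    (hg₂ : ReflTransGen (TightAdj ℓ (E.filter (W ⊆ ·))) e₀ g₂)
    (h₁ : insert z (insert a₁ Q) ⊆ g₁) (h₂ : insert z (insert a₂ Q) ⊆ g₂)
    (hnear : LinkNear E (insert z Q) a₁ a₂) :
    ∃ g, ReflTransGen (TightAdj ℓ (E.filter (W ⊆ ·))) e₀ g ∧ insert z (insert β Q) ⊆ g := by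
  have hf' : insert a₂ (insert a₁ (insert β Q)) ∈ E := by simpa only [insert_comm] using hf
  rcases hnear with hN | ⟨c, hc₁, hc₂⟩
  · exact hdisp.exists_reflTransGen_of_exchange hunif hQ hWQ he₀ hβz
      (reflTransGen_insert_of_subset hunif hQ hWQ he₀ hg₁ h₁
        (by simpa only [insert_comm] using hN)) hf'
  have hr₁ := reflTransGen_insert_of_subset hunif hQ hWQ he₀ hg₁ h₁ (w := c)
    (by simpa only [insert_comm] using hc₁)
  have hr₂ := reflTransGen_insert_of_subset hunif hQ hWQ he₀ hg₂ h₂ (w := c)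
    (by simpa only [insert_comm] using hc₂)
  by_cases hcβ : c = β
  · exact ⟨_, hr₁, fun u => by simp only [hcβ, mem_insert]; tauto⟩
  have ha₁₂ : a₁ ≠ a₂ := by
    have := (notMem_of_card_insert_insert_insert (by rw [hunif _ hf, hQ])).1; grind
  rcases hdisp.insert_mem_or_insert_mem hunif hQ ha₁₂
    (mem_filter.1 (TightAdj.mem_of_reflTransGen hr₁ he₀)).1
    (mem_filter.1 (TightAdj.mem_of_reflTransGen hr₂ he₀)).1 with hN | hc
  · exact hdisp.exists_reflTransGen_of_exchange hunif hQ hWQ he₀ hβz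
      (reflTransGen_insert_of_subset hunif hQ hWQ he₀ hr₁
        (fun u => by simp only [mem_insert]; tauto) (by simpa only [insert_comm] using hN)) hf'
  rcases hdisp.insert_mem_or_insert_mem hunif hQ hcβ hc hf with h | h
  · exact hdisp.exists_reflTransGen_of_exchange hunif hQ hWQ he₀ hβz hr₁
      (by simpa only [insert_comm] using h)
  · exact hdisp.exists_reflTransGen_of_exchange hunif hQ hWQ he₀ hβz hr₂
      (by simpa only [insert_comm] using h)

end LinkOfQ

theorem erase_subset_of_card_le_card_inter {e f : Finset V} {β : V} (hβf : β ∈ f) (hβe : β ∉ e)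
    (hef : #f ≤ #(e ∩ f) + 1) : f.erase β ⊆ e := by
  have : e ∩ f = f.erase β := eq_of_subset_of_card_le
    (fun y hy => mem_erase.2 ⟨fun h => hβe (h ▸ (mem_inter.1 hy).1), (mem_inter.1 hy).2⟩)
    (by rw [card_erase_of_mem hβf]; omega)
  exact this ▸ inter_subset_left

theorem Disperse.exists_reflTransGen_of_notMem (hdisp : Disperse ℓ E)
    (hunif : ∀ e ∈ E, #e = ℓ) {Z Q : Finset V} {z β : V} {e₀ e f : Finset V}
    (hIH : LinkNearOfTightConn ℓ E (insert z Z)) (he₀ : e₀ ∈ E.filter (insert z Z ⊆ ·))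
    (hcov : LinkCovered ℓ E (insert z Z) z e₀ e) (hf : f ∈ E) (hzf : z ∉ f) (hβf : β ∈ f)
    (hβz : β ≠ z) (hfe : f.erase β ⊆ e) (hQ : #Q + 3 = ℓ) (hzQ : z ∉ Q) (hZQ : Z ⊆ insert z Q)
    (hQf : Q ⊆ f.erase β) :
    ∃ g, ReflTransGen (TightAdj ℓ (E.filter (insert z Z ⊆ ·))) e₀ g ∧
      insert z (insert β Q) ⊆ g := by
  have hfβ : #(f.erase β) = #Q + 2 := by rw [card_erase_of_mem hβf, hunif f hf]; omega
  obtain ⟨a₁, a₂, hfQ⟩ := exists_eq_insert_insert_of_subset hQf hfβ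
  have hWQ : insert z Z ⊆ insert z Q := insert_subset (mem_insert_self _ _) hZQ
  have hf' : insert a₁ (insert a₂ (insert β Q)) ∈ E := by
    have : insert β (insert a₁ (insert a₂ Q)) ∈ E := by rwa [← hfQ, insert_erase hβf]
    simpa only [insert_comm] using this
  have hQa : a₁ ∉ insert a₂ Q ∧ a₂ ∉ Q := by
    rw [hfQ] at hfβ
    grind [card_insert_eq_ite]
  have ha₁ : a₁ ∈ f.erase β := by simp [hfQ]
  have ha₂ : a₂ ∈ f.erase β := by simp [hfQ]
  have hnz {a : V} (ha : a ∈ f.erase β) : a ≠ z := fun h => hzf (h ▸ mem_of_mem_erase ha)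
  have hcover {a : V} (ha : a ∈ f.erase β) (haQ : a ∉ Q) :
      ∃ g, ReflTransGen (TightAdj ℓ (E.filter (insert z Z ⊆ ·))) e₀ g ∧
        insert z (insert a Q) ⊆ g := by
    have := hnz ha
    refine hcov _ (hWQ.trans (insert_subset_insert z (subset_insert _ _)))
      (insert_subset_insert z (insert_subset (hfe ha) (hQf.trans hfe))) ?_
    rw [card_insert_of_notMem (by grind), card_insert_of_notMem haQ]; omega
  obtain ⟨g₁, hg₁, h₁⟩ := hcover ha₁ (by grind)
  obtain ⟨g₂, hg₂, h₂⟩ := hcover ha₂ hQa.2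
  have hnear : LinkNear E (insert z Q) a₁ a₂ :=
    hIH hWQ (by rw [card_insert_of_notMem hzQ]; omega)
      (by have := hnz ha₁; grind) (by have := hnz ha₂; grind) (by grind)
      (mem_filter.1 (TightAdj.mem_of_reflTransGen hg₁ he₀)).1
      (by rwa [insert_comm]) (by rwa [insert_comm]) ((Std.Symm.symm _ _ hg₁).trans hg₂)
  exact hdisp.exists_reflTransGen_of_linkNear hunif hQ hWQ he₀ hβz hf' hg₁ hg₂ h₁ h₂ hnear

theorem Disperse.linkCovered_of_tightAdj (hdisp : Disperse ℓ E) (hunif : ∀ e ∈ E, #e = ℓ)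
    {Z : Finset V} {z : V} {e₀ e f : Finset V} (hIH : LinkNearOfTightConn ℓ E (insert z Z))
    (he₀ : e₀ ∈ E.filter (insert z Z ⊆ ·)) (hadj : TightAdj ℓ (E.filter (Z ⊆ ·)) e f)
    (hcov : LinkCovered ℓ E (insert z Z) z e₀ e) : LinkCovered ℓ E (insert z Z) z e₀ f := by
  intro T hWT hTf hT
  by_cases hTe : T ⊆ insert z e
  · exact hcov T hWT hTe hT
  obtain ⟨β, hβT, hβe⟩ := not_subset.1 hTe
  obtain ⟨⟨-, hZe⟩, ⟨hf, hZf⟩, hef⟩ :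
      (e ∈ E ∧ Z ⊆ e) ∧ (f ∈ E ∧ Z ⊆ f) ∧ ℓ - 1 ≤ #(e ∩ f) := by
    simpa only [TightAdj, mem_filter] using hadj
  have hβz : β ≠ z := fun h => hβe (h ▸ mem_insert_self _ _)
  have hβf : β ∈ f := (mem_insert.1 (hTf hβT)).resolve_left hβz
  have hfe : f.erase β ⊆ e := erase_subset_of_card_le_card_inter hβf
    (fun h => hβe (mem_insert_of_mem h)) (by rw [hunif f hf]; omega)
  by_cases hzf : z ∈ f
  · obtain ⟨g, hg, hfg⟩ := hcov (f.erase β)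
      (insert_subset (mem_erase.2 ⟨hβz.symm, hzf⟩)
        fun y hy => mem_erase.2 ⟨fun h => hβe (h ▸ mem_insert_of_mem (hZe hy)), hZf hy⟩)
      (hfe.trans (subset_insert _ _)) (by rw [card_erase_of_mem hβf, hunif f hf]; omega)
    exact ⟨f, reflTransGen_tail_of_subset he₀ hg hf (insert_subset hzf hZf) hfg
      (erase_subset β f) (by rw [card_erase_of_mem hβf, hunif f hf]; omega),
      by rwa [insert_eq_of_mem hzf] at hTf⟩
  obtain ⟨Q, hzQ, hβQ, rfl⟩ : ∃ Q, z ∉ insert β Q ∧ β ∉ Q ∧ T = insert z (insert β Q) :=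
    ⟨(T.erase z).erase β, by simp [hβz.symm], notMem_erase _ _, by
      rw [insert_erase (mem_erase.2 ⟨hβz, hβT⟩), insert_erase (hWT (mem_insert_self _ _))]⟩
  refine hdisp.exists_reflTransGen_of_notMem hunif hIH he₀ hcov hf hzf hβf hβz hfe
    (by rw [← hT, card_insert_of_notMem hzQ, card_insert_of_notMem hβQ]) (by grind)
    (fun y hy => ?_) (fun y hy => ?_)
  · have := hWT (mem_insert_of_mem hy)
    have : y ∈ e := hZe hy
    grind
  · have := hTf (mem_insert_of_mem (mem_insert_of_mem hy))
    grind

theorem Disperse.linkNearOfTightConn_of_insert (hdisp : Disperse ℓ E)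
    (hunif : ∀ e ∈ E, #e = ℓ) {Z : Finset V} (hZ : #Z + 2 < ℓ)
    (hIH : ∀ z ∉ Z, LinkNearOfTightConn ℓ E (insert z Z)) : LinkNearOfTightConn ℓ E Z := by
  intro S a₁ a₂ e₁ e₂ hZS hS ha₁ ha₂ ha₁₂ he₁ h₁ h₂ hconn
  obtain ⟨z, hzS, hzZ⟩ := exists_mem_notMem_of_card_lt_card (s := Z) (t := S) (by omega)
  have hWS : insert z Z ⊆ S := insert_subset hzS hZS
  have hSe₁ : S ⊆ e₁ := (subset_insert _ _).trans h₁
  have he₀ : e₁ ∈ E.filter (insert z Z ⊆ ·) := mem_filter.2 ⟨he₁, hWS.trans hSe₁⟩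
  have hcov : ∀ e, ReflTransGen (TightAdj ℓ (E.filter (Z ⊆ ·))) e₁ e →
      LinkCovered ℓ E (insert z Z) z e₁ e := by
    intro e he
    induction he with
    | refl => exact fun T _ hT _ => ⟨e₁, .refl, by rwa [insert_eq_of_mem (hSe₁ hzS)] at hT⟩
    | tail _ hadj ih => exact hdisp.linkCovered_of_tightAdj hunif (hIH z hzZ) he₀ hadj ih
  obtain ⟨g, hg, hg₂⟩ := hcov e₂ hconn (insert a₂ S) (hWS.trans (subset_insert _ _))
    (h₂.trans (subset_insert _ _)) (by rw [card_insert_of_notMem ha₂]; omega)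
  exact hIH z hzZ hWS hS ha₁ ha₂ ha₁₂ he₁ h₁ hg₂ hg

theorem Disperse.linkNearOfTightConn (hdisp : Disperse ℓ E) (hunif : ∀ e ∈ E, #e = ℓ)
    (hℓ : 3 ≤ ℓ) {Z : Finset V} (hZ : #Z + 2 ≤ ℓ) : LinkNearOfTightConn ℓ E Z := by
  refine strongDownwardInduction (n := ℓ - 2) (p := LinkNearOfTightConn ℓ E)
    (fun Z ih hZ => ?_) Z (by omega)
  rcases (by omega : #Z + 2 = ℓ ∨ #Z + 2 < ℓ) with hZ | hZ
  · exact hdisp.linkNearOfTightConn_of_card hunif hℓ hZ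
  · exact hdisp.linkNearOfTightConn_of_insert hunif hZ fun z hz =>
      ih (by rw [card_insert_of_notMem hz]; omega) (ssubset_insert hz)

theorem exists_eq_insert_inter {A B : Finset V} (h : #(A ∩ B) + 1 = #A) :
    ∃ a ∉ B, A = insert a (A ∩ B) := by
  obtain ⟨a, ha⟩ := card_eq_one.1 (by have := card_sdiff_add_card_inter A B; omega :
    #(A \ B) = 1)
  refine ⟨a, (mem_sdiff.1 (ha ▸ mem_singleton_self a)).2, ?_⟩
  calc A = A \ B ∪ A ∩ B := (sdiff_union_inter A B).symm
    _ = insert a (A ∩ B) := by rw [ha, singleton_union]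

end

theorem tight_walk_length_two {V : Type*} [DecidableEq V] (ℓ : ℕ) (hℓ : 3 ≤ ℓ)
    (E : Finset (Finset V)) (hunif : ∀ e ∈ E, e.card = ℓ) (hdisp : Disperse ℓ E)
    (A₁ A₂ : Finset V) (h₁ : A₁.card = ℓ - 1) (h₂ : A₂.card = ℓ - 1)
    (hint : (A₁ ∩ A₂).card = ℓ - 2) (hconn : TightConn ℓ E A₁ A₂) :
    ∃ e₁ ∈ E, ∃ e₂ ∈ E, ℓ - 1 ≤ (e₁ ∩ e₂).card ∧ A₁ ⊆ e₁ ∧ A₂ ⊆ e₂ := by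
  obtain ⟨e₁, e₂, he₁, hA₁, hA₂, hwalk⟩ := hconn.exists_reflTransGen
  obtain ⟨a₁, ha₁, hA₁eq⟩ := exists_eq_insert_inter (A := A₁) (B := A₂) (by omega)
  obtain ⟨a₂, ha₂, hA₂eq⟩ := exists_eq_insert_inter (A := A₂) (B := A₁) (by rw [inter_comm]; omega)
  rw [inter_comm] at hA₂eq
  set S := A₁ ∩ A₂
  have hS : #S + 2 = ℓ := by omega
  have ha₂A₂ : a₂ ∈ A₂ := by rw [hA₂eq]; exact mem_insert_self _ _
  have hnear := hdisp.linkNearOfTightConn hunif hℓ (Z := ∅) (by simp only [card_empty]; omega)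
    (empty_subset S) hS (fun h => ha₁ (mem_inter.1 h).2) (fun h => ha₂ (mem_inter.1 h).1)
    (fun h => ha₁ (h ▸ ha₂A₂)) he₁ (hA₁eq ▸ hA₁) (hA₂eq ▸ hA₂)
    (by simpa only [empty_subset, filter_true_of_mem, implies_true] using hwalk)
  rw [hA₁eq, hA₂eq]
  exact hnear.exists_edges hunif hS
end

section
/- Let G be a disperse ℓ-uniform hypergraph (ℓ ≥ 3), let B ⊆ V(G) with |B| = ℓ, and let A₁, A₂ ⊆ B be distinct (ℓ−1)-subsets. If A₁ and A₂ belong to the same tight component of G, then every (ℓ−1)-subset of B belongs to that tight component. -/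
open Finset

/-!
Let `x` be the vertex of `B` outside `A₁`; it lies in the last edge of the tight walk from `A₁`
to `A₂`. In a disperse hypergraph an `(ℓ+1)`-set spanning two edges misses at most one of its
`ℓ`-subsets. Applied to sets of the form `f + x` and `f + b`, this lets the property
`LinkReachable` (the edge `f` contains an edge of the link of `x`, or the link of `x` contains
the whole star at some `b ∉ f` inside `f + b`) propagate backwards along the walk, from the last
edge to the first edge `e ⊇ A₁`. Every `(ℓ-1)`-subset of `B` not inside `e` has the form
`S + x` with `S ⊆ e`, and at `e` either alternative yields an edge containing `S + x` within two
tight steps of `e`.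
-/

section TightWalk

variable {V : Type*} [DecidableEq V] {k : ℕ} {E : Finset (Finset V)} {A B C e e' : Finset V}

theorem tightConn_of_subset (he : e ∈ E) (hA : A ⊆ e) (hB : B ⊆ e) : TightConn k E A B :=
  ⟨[e], List.cons_ne_nil _ _, by simpa using he, List.isChain_singleton _, hA, hB⟩

theorem TightConn.cons (he : e ∈ E) (hA : A ⊆ e) (hCe : C ⊆ e) (hCe' : C ⊆ e')
    (hC : k - 1 ≤ #C) (h : TightConn k E e' B) : TightConn k E A B := by
  obtain ⟨_ | ⟨g, gs⟩, hne, hE, hchain, hhead, hlast⟩ := h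
  · exact absurd rfl hne
  refine ⟨e :: g :: gs, List.cons_ne_nil _ _, List.forall_mem_cons.2 ⟨he, hE⟩, ?_, hA, ?_⟩
  · exact List.isChain_cons_cons.2
      ⟨hC.trans (card_le_card (subset_inter hCe (hCe'.trans hhead))), hchain⟩
  · simpa using hlast

end TightWalk

section Disperse

variable {V : Type*} [DecidableEq V] {ℓ : ℕ} {E : Finset (Finset V)}

theorem exists_erase_subset_of_card_inter {f f' : Finset V} (hf : #f = ℓ) (hf' : #f' = ℓ)
    (hne : f ≠ f') (h : ℓ - 1 ≤ #(f ∩ f')) : ∃ v ∈ f', v ∉ f ∧ f'.erase v ⊆ f := by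
  have hsd := card_sdiff_add_card_inter f' f
  rw [inter_comm] at hsd
  obtain ⟨v, hv⟩ : ∃ v, f' \ f = {v} := by
    refine card_eq_one.1 (le_antisymm (by omega) (card_pos.2 (sdiff_nonempty.2 fun hsub => ?_)))
    exact hne (eq_of_subset_of_card_le hsub (by omega)).symm
  have hvf : v ∈ f' \ f := hv ▸ mem_singleton_self v
  refine ⟨v, (mem_sdiff.1 hvf).1, (mem_sdiff.1 hvf).2, fun t ht => ?_⟩
  by_contra htf
  have : t ∈ f' \ f := mem_sdiff.2 ⟨mem_of_mem_erase ht, htf⟩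
  rw [hv, mem_singleton] at this
  exact notMem_erase v f' (this ▸ ht)

theorem Disperse.mem_or_mem (hunif : ∀ e ∈ E, #e = ℓ) (hdisp : Disperse ℓ E)
    {X Z₁ Z₂ : Finset V} (hX : #X = ℓ + 1) (htwo : 1 < #(E.filter (· ⊆ X)))
    (hZ₁ : Z₁ ⊆ X) (hZ₂ : Z₂ ⊆ X) (hZ₁c : #Z₁ = ℓ) (hZ₂c : #Z₂ = ℓ) (hne : Z₁ ≠ Z₂) :
    Z₁ ∈ E ∨ Z₂ ∈ E := by
  by_contra! h
  have hsub : E.filter (· ⊆ X) ⊆ X.powersetCard ℓ \ {Z₁, Z₂} := by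
    intro e he
    rw [mem_filter] at he
    simp only [mem_sdiff, mem_powersetCard, mem_insert, mem_singleton]
    refine ⟨⟨he.2, hunif e he.1⟩, ?_⟩
    rintro (rfl | rfl)
    exacts [h.1 he.1, h.2 he.1]
  have hpair : {Z₁, Z₂} ⊆ X.powersetCard ℓ := by
    simp [insert_subset_iff, mem_powersetCard, *]
  have hle := card_le_card hsub
  rw [card_sdiff_of_subset hpair, card_powersetCard, hX, Nat.choose_succ_self_right,
    card_pair hne] at hle
  rcases hdisp X hX with h | h | h | h <;> omega

theorem Disperse.exists_erase_mem (hunif : ∀ e ∈ E, #e = ℓ) (hdisp : Disperse ℓ E)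
    {X D : Finset V} (hX : #X = ℓ + 1) (htwo : 1 < #(E.filter (· ⊆ X))) (hDX : D ⊆ X)
    (hD : #D + 1 = ℓ) : ∃ u ∈ X, u ∉ D ∧ X.erase u ∈ E := by
  obtain ⟨p, q, hpq, hXD⟩ := card_eq_two.1 (by rw [card_sdiff_of_subset hDX]; omega :
    #(X \ D) = 2)
  have hp : p ∈ X \ D := by simp [hXD]
  have hq : q ∈ X \ D := by simp [hXD]
  rw [mem_sdiff] at hp hq
  have hcard : ∀ u ∈ X, #(X.erase u) = ℓ := fun u hu => by rw [card_erase_of_mem hu, hX]; rfl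
  rcases hdisp.mem_or_mem hunif hX htwo (erase_subset p X) (erase_subset q X) (hcard p hp.1)
    (hcard q hq.1) ((erase_inj X hp.1).not.2 hpq) with h | h
  exacts [⟨p, hp.1, hp.2, h⟩, ⟨q, hq.1, hq.2, h⟩]

theorem mem_linkEdges_iff {x : V} {D : Finset V} :
    D ∈ linkEdges E x ↔ x ∉ D ∧ insert x D ∈ E := by
  constructor
  · simp only [linkEdges, mem_image, mem_filter]
    rintro ⟨e, ⟨he, hxe⟩, rfl⟩
    exact ⟨notMem_erase x e, by rwa [insert_erase hxe]⟩
  · rintro ⟨hx, hD⟩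
    exact mem_image.2 ⟨insert x D, mem_filter.2 ⟨hD, mem_insert_self x D⟩, erase_insert hx⟩

theorem card_add_one_of_mem_linkEdges (hunif : ∀ e ∈ E, #e = ℓ) {x : V} {D : Finset V}
    (hD : D ∈ linkEdges E x) : #D + 1 = ℓ := by
  rw [mem_linkEdges_iff] at hD
  rw [← card_insert_of_notMem hD.1, hunif _ hD.2]

theorem Disperse.mem_linkEdges_or_mem_linkEdges (hunif : ∀ e ∈ E, #e = ℓ)
    (hdisp : Disperse ℓ E) {x : V} {W D₀ D D' : Finset V} (hW : W ∈ E) (hxW : x ∉ W)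
    (hD₀ : D₀ ∈ linkEdges E x) (hD₀W : D₀ ⊆ W) (hDW : D ⊆ W) (hD'W : D' ⊆ W)
    (hD : #D + 1 = ℓ) (hD' : #D' + 1 = ℓ) (hne : D ≠ D') :
    D ∈ linkEdges E x ∨ D' ∈ linkEdges E x := by
  have hxD : x ∉ D := notMem_mono hDW hxW
  have hxD' : x ∉ D' := notMem_mono hD'W hxW
  have htwo : 1 < #(E.filter (· ⊆ insert x W)) := by
    refine one_lt_card.2 ⟨W, by simp [hW, subset_insert], insert x D₀, ?_, ?_⟩
    · simpa [mem_linkEdges_iff.1 hD₀] using insert_subset_insert x hD₀W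
    · exact fun h => hxW (h ▸ mem_insert_self x D₀)
  have hne' : insert x D ≠ insert x D' := fun h => hne (by
    rw [← erase_insert hxD, h, erase_insert hxD'])
  simp only [mem_linkEdges_iff, hxD, hxD', not_false_eq_true, true_and]
  exact hdisp.mem_or_mem hunif (by rw [card_insert_of_notMem hxW, hunif W hW]) htwo
    (insert_subset_insert x hDW) (insert_subset_insert x hD'W)
    (by rw [card_insert_of_notMem hxD, hD]) (by rw [card_insert_of_notMem hxD', hD']) hne'

def IsLinkStar (ℓ : ℕ) (E : Finset (Finset V)) (x b : V) (Y : Finset V) : Prop :=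
  ∀ D ⊆ Y, #D + 1 = ℓ → b ∈ D → D ∈ linkEdges E x

theorem IsLinkStar.insert_erase_mem {x b z : V} {C : Finset V}
    (hstar : IsLinkStar ℓ E x b (insert b C)) (hbC : b ∉ C) (hC : #C + 1 = ℓ) (hz : z ∈ C) :
    insert b (C.erase z) ∈ linkEdges E x := by
  refine hstar _ (insert_subset_insert b (erase_subset z C)) ?_ (mem_insert_self b _)
  have := card_pos.2 ⟨z, hz⟩
  rw [card_insert_of_notMem (notMem_mono (erase_subset z C) hbC), card_erase_of_mem hz]
  omega

theorem Disperse.insert_mem_or_insert_mem_of_isLinkStar (hℓ : 3 ≤ ℓ)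
    (hunif : ∀ e ∈ E, #e = ℓ) (hdisp : Disperse ℓ E) {x b : V} {C : Finset V} (hxC : x ∉ C)
    (hbC : b ∉ C) (hC : #C + 1 = ℓ) (hstar : IsLinkStar ℓ E x b (insert b C)) :
    insert x C ∈ E ∨ insert b C ∈ E := by
  obtain ⟨z₁, hz₁, z₂, hz₂, hz⟩ := one_lt_card.1 (by omega : 1 < #C)
  have hg₁ := mem_linkEdges_iff.1 (hstar.insert_erase_mem hbC hC hz₁)
  have hg₂ := mem_linkEdges_iff.1 (hstar.insert_erase_mem hbC hC hz₂)
  have hxb : x ≠ b := fun h => hg₁.1 (by simp [h])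
  -- `C + x + b` spans the two edges `C - zᵢ + x + b`
  have htwo : 1 < #(E.filter (· ⊆ insert x (insert b C))) := by
    refine one_lt_card.2 ⟨_, mem_filter.2 ⟨hg₁.2, ?_⟩, _, mem_filter.2 ⟨hg₂.2, ?_⟩, fun h => ?_⟩
    · exact insert_subset_insert x (insert_subset_insert b (erase_subset z₁ C))
    · exact insert_subset_insert x (insert_subset_insert b (erase_subset z₂ C))
    · have : z₂ ∈ insert x (insert b (C.erase z₂)) := h ▸ by simp [hz₂, hz.symm]
      simp only [mem_insert, notMem_erase, or_false] at this
      rcases this with rfl | rfl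
      exacts [hxC hz₂, hbC hz₂]
  exact hdisp.mem_or_mem hunif (by simp [card_insert_of_notMem, hxb, hxC, hbC, hC])
    htwo (insert_subset_insert x (subset_insert b C)) (subset_insert x (insert b C))
    (by rw [card_insert_of_notMem hxC, hC]) (by rw [card_insert_of_notMem hbC, hC])
    (fun h => hxb ((mem_insert.1 (h ▸ mem_insert_self x C)).resolve_right hxC))

theorem Disperse.isLinkStar_of_mem (hunif : ∀ e ∈ E, #e = ℓ) (hdisp : Disperse ℓ E)
    {x b : V} {W D₀ : Finset V} (hW : W ∈ E) (hxW : x ∉ W) (hbW : b ∈ W)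
    (hD₀ : D₀ ∈ linkEdges E x) (hD₀W : D₀ ⊆ W) (hb : ∀ D ∈ linkEdges E x, D ⊆ W → b ∈ D) :
    IsLinkStar ℓ E x b W := by
  intro D hDW hD hbD
  have hWb : W.erase b ∉ linkEdges E x := fun h => notMem_erase b W (hb _ h (erase_subset b W))
  refine (hdisp.mem_linkEdges_or_mem_linkEdges hunif hW hxW hD₀ hD₀W hDW (erase_subset b W) hD
    ?_ ?_).resolve_right hWb
  · rw [card_erase_of_mem hbW, hunif W hW]
    have := card_add_one_of_mem_linkEdges hunif hD₀
    omega
  · rintro rfl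
    exact notMem_erase b W hbD

theorem Disperse.isLinkStar_of_card_eq (hunif : ∀ e ∈ E, #e = ℓ) (hdisp : Disperse ℓ E)
    {x b : V} {X D₀ : Finset V} (hX : #X = ℓ + 1) (htwo : 1 < #(E.filter (· ⊆ X)))
    (hxX : x ∉ X) (hD₀ : D₀ ∈ linkEdges E x) (hD₀X : D₀ ⊆ X)
    (hb : ∀ D ∈ linkEdges E x, D ⊆ X → b ∈ D) : IsLinkStar ℓ E x b X := by
  have hbD₀ := hb D₀ hD₀ hD₀X
  have hD₀c := card_add_one_of_mem_linkEdges hunif hD₀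
  have star : ∀ u, X.erase u ∈ E → b ≠ u → ∀ D₁ ∈ linkEdges E x, D₁ ⊆ X.erase u →
      IsLinkStar ℓ E x b (X.erase u) := fun u hu hbu D₁ hD₁ hD₁u =>
    hdisp.isLinkStar_of_mem hunif hu (notMem_mono (erase_subset u X) hxX)
      (mem_erase.2 ⟨hbu, hD₀X hbD₀⟩) hD₁ hD₁u fun D hD hDu => hb D hD (hDu.trans (erase_subset u X))
  obtain ⟨w, hwX, hwD₀, hw⟩ := hdisp.exists_erase_mem hunif hX htwo hD₀X hD₀c
  have hbw : b ≠ w := ne_of_mem_of_not_mem hbD₀ hwD₀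
  have star₀ := star w hw hbw D₀ hD₀ (subset_erase.2 ⟨hD₀X, hwD₀⟩)
  intro D hDX hD hbD
  obtain ⟨u, huX, huD, hu⟩ := hdisp.exists_erase_mem hunif hX htwo hDX hD
  have hDu : D ⊆ X.erase u := subset_erase.2 ⟨hDX, huD⟩
  rcases eq_or_ne u w with rfl | huw
  · exact star₀ D hDu hD hbD
  have hbu : b ≠ u := ne_of_mem_of_not_mem hbD huD
  -- the edges `X - u` and `X - w` share the link edge `X - u - w`
  have hD₁ : (X.erase u).erase w ∈ linkEdges E x := by
    refine star₀ _ (by rw [erase_right_comm]; exact erase_subset u _) ?_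
      (mem_erase.2 ⟨hbw, mem_erase.2 ⟨hbu, hD₀X hbD₀⟩⟩)
    rw [card_erase_of_mem (mem_erase.2 ⟨huw.symm, hwX⟩), card_erase_of_mem huX, hX]
    omega
  exact star u hu hbu _ hD₁ (erase_subset w _) D hDu hD hbD

/-- The invariant carried backwards along a tight walk ending in an edge through `x`. -/
def LinkReachable (ℓ : ℕ) (E : Finset (Finset V)) (x : V) (f : Finset V) : Prop :=
  (∃ D ∈ linkEdges E x, D ⊆ f) ∨ ∃ b ∉ f, IsLinkStar ℓ E x b (insert b f)

theorem linkReachable_of_mem {x : V} {f : Finset V} (hf : f ∈ E) (hxf : x ∈ f) :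
    LinkReachable ℓ E x f :=
  Or.inl ⟨f.erase x, mem_linkEdges_iff.2 ⟨notMem_erase x f, by rwa [insert_erase hxf]⟩,
    erase_subset x f⟩

theorem Disperse.linkReachable_of_subset_insert (hunif : ∀ e ∈ E, #e = ℓ)
    (hdisp : Disperse ℓ E) {x b : V} {f g D₀ : Finset V} (hf : f ∈ E) (hg : g ∈ E)
    (hgf : g ≠ f) (hgb : g ⊆ insert b f) (hbf : b ∉ f) (hxf : x ∉ f)
    (hD₀ : D₀ ∈ linkEdges E x) (hD₀b : D₀ ⊆ insert b f) : LinkReachable ℓ E x f := by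
  by_cases hb : ∀ D ∈ linkEdges E x, D ⊆ insert b f → b ∈ D
  · have hxb : x ≠ b := fun h => (mem_linkEdges_iff.1 hD₀).1 (h ▸ hb D₀ hD₀ hD₀b)
    have htwo : 1 < #(E.filter (· ⊆ insert b f)) :=
      one_lt_card.2 ⟨f, by simp [hf, subset_insert], g, by simp [hg, hgb], hgf.symm⟩
    exact Or.inr ⟨b, hbf, hdisp.isLinkStar_of_card_eq hunif
      (by rw [card_insert_of_notMem hbf, hunif f hf]) htwo (by simp [hxb, hxf]) hD₀ hD₀b hb⟩
  · push Not at hb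
    obtain ⟨D, hD, hDb, hbD⟩ := hb
    exact Or.inl ⟨D, hD, (subset_insert_iff_of_notMem hbD).1 hDb⟩

theorem Disperse.linkReachable_of_adj (hℓ : 3 ≤ ℓ) (hunif : ∀ e ∈ E, #e = ℓ)
    (hdisp : Disperse ℓ E) {x : V} {f f' : Finset V} (hf : f ∈ E) (hf' : f' ∈ E)
    (hadj : ℓ - 1 ≤ #(f ∩ f')) (h : LinkReachable ℓ E x f') : LinkReachable ℓ E x f := by
  by_cases hxf : x ∈ f
  · exact linkReachable_of_mem hf hxf
  rcases eq_or_ne f f' with rfl | hne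
  · exact h
  obtain ⟨v, hvf', hvf, hCf⟩ :=
    exists_erase_subset_of_card_inter (hunif f hf) (hunif f' hf') hne hadj
  rcases h with ⟨D, hD, hDf'⟩ | ⟨b, hbf', hstar⟩
  · have hf'v : f' ⊆ insert v f := by
      rw [← insert_erase hvf']
      exact insert_subset_insert v hCf
    exact hdisp.linkReachable_of_subset_insert hunif hf hf' hne.symm hf'v hvf hxf hD
      (hDf'.trans hf'v)
  set C := f'.erase v
  have hC : #C + 1 = ℓ := by rw [card_erase_of_mem hvf', hunif f' hf']; omega
  have hbC : b ∉ C := notMem_mono (erase_subset v f') hbf'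
  have hxC : x ∉ C := notMem_mono hCf hxf
  have hstarC : IsLinkStar ℓ E x b (insert b C) := fun D hD =>
    hstar D (hD.trans (insert_subset_insert b (erase_subset v f')))
  obtain ⟨z, hz⟩ : C.Nonempty := card_pos.1 (by omega)
  have hD₀ := hstarC.insert_erase_mem hbC hC hz
  by_cases hbf : b ∈ f
  · exact Or.inl ⟨_, hD₀, insert_subset hbf ((erase_subset z C).trans hCf)⟩
  rcases hdisp.insert_mem_or_insert_mem_of_isLinkStar hℓ hunif hxC hbC hC hstarC with h | h
  · exact Or.inl ⟨C, mem_linkEdges_iff.2 ⟨hxC, h⟩, hCf⟩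
  · exact hdisp.linkReachable_of_subset_insert hunif hf h
      (fun h' => hbf (h' ▸ mem_insert_self b C)) (insert_subset_insert b hCf) hbf hxf hD₀
      (insert_subset_insert b ((erase_subset z C).trans hCf))

theorem Disperse.linkReachable_head (hℓ : 3 ≤ ℓ) (hunif : ∀ e ∈ E, #e = ℓ)
    (hdisp : Disperse ℓ E) {x : V} {es : List (Finset V)} (hne : es ≠ [])
    (hes : ∀ e ∈ es, e ∈ E) (hchain : es.IsChain (fun a b => ℓ - 1 ≤ #(a ∩ b)))
    (hx : x ∈ es.getLast hne) : LinkReachable ℓ E x (es.head hne) := by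
  have hchainE : es.IsChain (fun a b => b ∈ E ∧ ℓ - 1 ≤ #(a ∩ b)) :=
    List.IsChain.imp_of_mem_imp (fun _ b _ hb h => ⟨hes b hb, h⟩) hchain
  refine hchainE.backwards_induction (fun f => f ∈ E → LinkReachable ℓ E x f) es
    (fun f f' ⟨hf', hadj⟩ h hf => hdisp.linkReachable_of_adj hℓ hunif hf hf' hadj (h hf'))
    (fun _ hf => linkReachable_of_mem hf hx) _ (List.head_mem hne) (hes _ (List.head_mem hne))

theorem Disperse.tightConn_insert_of_mem_linkEdges (hunif : ∀ e ∈ E, #e = ℓ)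
    (hdisp : Disperse ℓ E) {x : V} {A e S D : Finset V} (he : e ∈ E) (hxe : x ∉ e)
    (hD : D ∈ linkEdges E x) (hDe : D ⊆ e) (hAe : A ⊆ e) (hSe : S ⊆ e) (hS : #S + 2 = ℓ) :
    TightConn ℓ E A (insert x S) := by
  have hec := hunif e he
  have htwo : 1 < #(E.filter (· ⊆ insert x e)) := by
    refine one_lt_card.2 ⟨e, by simp [he, subset_insert], insert x D, ?_, ?_⟩
    · simpa [(mem_linkEdges_iff.1 hD).2] using insert_subset_insert x hDe
    · exact fun h => hxe (h ▸ mem_insert_self x D)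
  obtain ⟨c, hc, hcS, hU⟩ := hdisp.exists_erase_mem hunif
    (by rw [card_insert_of_notMem hxe, hec]) htwo (insert_subset_insert x hSe)
    (by rw [card_insert_of_notMem (notMem_mono hSe hxe)]; omega)
  have hce : c ∈ e := (mem_insert.1 hc).resolve_left fun h => hcS (h ▸ mem_insert_self x S)
  exact TightConn.cons he hAe (erase_subset c e) (erase_subset_erase c (subset_insert x e))
    (by rw [card_erase_of_mem hce, hec]) (tightConn_of_subset hU subset_rfl
      (subset_erase.2 ⟨insert_subset_insert x hSe, hcS⟩))

theorem Disperse.tightConn_insert_of_isLinkStar (hℓ : 3 ≤ ℓ) (hunif : ∀ e ∈ E, #e = ℓ)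
    (hdisp : Disperse ℓ E) {x b : V} {A e S : Finset V} (he : e ∈ E) (hxe : x ∉ e)
    (hbe : b ∉ e) (hstar : IsLinkStar ℓ E x b (insert b e)) (hAe : A ⊆ e) (hSe : S ⊆ e)
    (hS : #S + 2 = ℓ) : TightConn ℓ E A (insert x S) := by
  have hec := hunif e he
  obtain ⟨c, hc⟩ : (e \ S).Nonempty := card_pos.1 (by rw [card_sdiff_of_subset hSe]; omega)
  rw [mem_sdiff] at hc
  set C := insert c S
  have hCe : C ⊆ e := insert_subset hc.1 hSe
  have hC : #C + 1 = ℓ := by rw [card_insert_of_notMem hc.2]; omega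
  have hbC : b ∉ C := notMem_mono hCe hbe
  have hstarC : IsLinkStar ℓ E x b (insert b C) := fun D hD =>
    hstar D (hD.trans (insert_subset_insert b hCe))
  rcases hdisp.insert_mem_or_insert_mem_of_isLinkStar hℓ hunif (notMem_mono hCe hxe) hbC hC
    hstarC with h | h
  · exact TightConn.cons he hAe hCe (subset_insert x C) (by omega)
      (tightConn_of_subset h subset_rfl (insert_subset_insert x (subset_insert c S)))
  · have hg := hstarC.insert_erase_mem hbC hC (mem_insert_self c S)
    rw [erase_insert hc.2, mem_linkEdges_iff] at hg
    exact TightConn.cons he hAe hCe (subset_insert b C) (by omega)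
      (TightConn.cons h subset_rfl (insert_subset_insert b (subset_insert c S))
        (subset_insert x _) (by rw [card_insert_of_notMem (notMem_mono hSe hbe)]; omega)
        (tightConn_of_subset hg.2 subset_rfl (insert_subset_insert x (subset_insert b S))))

theorem Disperse.tightConn_insert (hℓ : 3 ≤ ℓ) (hunif : ∀ e ∈ E, #e = ℓ)
    (hdisp : Disperse ℓ E) {x : V} {A e S : Finset V} (he : e ∈ E) (hxe : x ∉ e)
    (hreach : LinkReachable ℓ E x e) (hAe : A ⊆ e) (hSe : S ⊆ e) (hS : #S + 2 = ℓ) :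
    TightConn ℓ E A (insert x S) := by
  rcases hreach with ⟨D, hD, hDe⟩ | ⟨b, hbe, hstar⟩
  · exact hdisp.tightConn_insert_of_mem_linkEdges hunif he hxe hD hDe hAe hSe hS
  · exact hdisp.tightConn_insert_of_isLinkStar hℓ hunif he hxe hbe hstar hAe hSe hS

end Disperse

theorem all_subsets_in_same_component {V : Type*} [DecidableEq V] (ℓ : ℕ) (hℓ : 3 ≤ ℓ)
    (E : Finset (Finset V)) (hunif : ∀ e ∈ E, e.card = ℓ) (hdisp : Disperse ℓ E)
    (B : Finset V) (hB : B.card = ℓ)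
    (A₁ A₂ : Finset V) (hA₁ : A₁ ⊆ B) (hA₂ : A₂ ⊆ B)
    (hA₁c : A₁.card = ℓ - 1) (hA₂c : A₂.card = ℓ - 1) (hne : A₁ ≠ A₂)
    (hconn : TightConn ℓ E A₁ A₂) :
    ∀ A : Finset V, A ⊆ B → A.card = ℓ - 1 → TightConn ℓ E A₁ A := by
  intro A hAB hAc
  obtain ⟨es, hes, hesE, hchain, hA₁e, hA₂e⟩ := hconn
  obtain ⟨x, hxA₂, hxA₁⟩ : ∃ x ∈ A₂, x ∉ A₁ :=
    not_subset.1 fun h => hne (eq_of_subset_of_card_le h (by omega)).symm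
  have hB : insert x A₁ = B := eq_of_subset_of_card_le (insert_subset (hA₂ hxA₂) hA₁)
    (by rw [card_insert_of_notMem hxA₁]; omega)
  have he : es.head hes ∈ E := hesE _ (List.head_mem hes)
  by_cases hAe : A ⊆ es.head hes
  · exact tightConn_of_subset he hA₁e hAe
  have hAx : A.erase x ⊆ es.head hes := fun a ha =>
    hA₁e ((mem_insert.1 (hB ▸ hAB (mem_of_mem_erase ha))).resolve_left (ne_of_mem_erase ha))
  have hxA : x ∈ A := by_contra fun hxA => hAe (erase_eq_of_notMem hxA ▸ hAx)
  have hxe : x ∉ es.head hes := fun hxe => hAe (insert_erase hxA ▸ insert_subset hxe hAx)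
  have := hdisp.tightConn_insert hℓ hunif he hxe
    (hdisp.linkReachable_head hℓ hunif hes hesE hchain (hA₂e hxA₂)) hA₁e hAx
    (by rw [card_erase_of_mem hxA]; omega)
  rwa [insert_erase hxA] at this
end

section
/- Let G be an ℓ-uniform hypergraph (ℓ ≥ 2) with n vertices and average degree d = ℓ·e(G)/n. Then G has an independent set of size at least ((ℓ−1)/ℓ)·n·min{1, d^{−1/(ℓ−1)}}. -/
open Finset

lemma prob_sum {V : Type*} [DecidableEq V] [Fintype V] (p : ℝ) (B : Finset V) :
    ∑ A ∈ univ.powerset.filter (fun A => B ⊆ A),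
      ((∏ _v ∈ A, p) * ∏ _v ∈ univ \ A, (1 - p)) = p ^ B.card := by
  rw [Finset.sum_nbij' (i := fun A => A \ B) (j := fun T => T ∪ B)
      (t := (univ \ B).powerset)
      (g := fun T => p ^ B.card * ((∏ _v ∈ T, p) * ∏ _v ∈ (univ \ B) \ T, (1 - p)))]
  · rw [← Finset.mul_sum, ← Finset.prod_add]
    simp
  · intro A hA
    simp only [mem_powerset]
    exact sdiff_subset_sdiff (subset_univ _) le_rfl
  · intro T hT
    simp only [mem_filter, mem_powerset] at hT ⊢
    exact ⟨subset_univ _, subset_union_right⟩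
  · intro A hA
    simp only [mem_filter, mem_powerset] at hA
    exact sdiff_union_of_subset hA.2
  · intro T hT
    simp only [mem_powerset] at hT
    have : Disjoint T B := (subset_sdiff.mp (by simpa using hT)).2
    exact union_sdiff_cancel_right this
  · intro A hA
    simp only [mem_filter, mem_powerset] at hA
    have h1 : (∏ _v ∈ A, p) = p ^ B.card * ∏ _v ∈ A \ B, p := by
      rw [prod_const, prod_const, ← pow_add, card_sdiff_of_subset hA.2,
        Nat.add_sub_cancel' (card_le_card hA.2)]
    have h2 : univ \ A = (univ \ B) \ (A \ B) := by
      ext x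
      simp only [mem_sdiff, mem_univ, true_and]
      constructor
      · intro hx; exact ⟨fun hb => hx (hA.2 hb), fun h => hx h.1⟩
      · intro hx hxA
        rcases hx with ⟨hb, h⟩
        exact h ⟨hxA, hb⟩
    rw [h1, h2]; ring

lemma total_one {V : Type*} [DecidableEq V] [Fintype V] (p : ℝ) :
    ∑ A ∈ (univ : Finset V).powerset,
      ((∏ _v ∈ A, p) * ∏ _v ∈ univ \ A, (1 - p)) = 1 := by
  have := prob_sum p (∅ : Finset V)
  simpa using this

lemma card_exp {V : Type*} [DecidableEq V] [Fintype V] (p : ℝ) :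
    ∑ A ∈ (univ : Finset V).powerset,
      ((∏ _v ∈ A, p) * ∏ _v ∈ univ \ A, (1 - p)) * (A.card : ℝ)
      = (Fintype.card V : ℝ) * p := by
  have h : ∀ A : Finset V, (A.card : ℝ) = ∑ v ∈ (univ : Finset V), if v ∈ A then (1:ℝ) else 0 := by
    intro A
    rw [sum_ite_mem, univ_inter, sum_const]; simp
  calc ∑ A ∈ (univ : Finset V).powerset,
      ((∏ _v ∈ A, p) * ∏ _v ∈ univ \ A, (1 - p)) * (A.card : ℝ)
      = ∑ A ∈ (univ : Finset V).powerset, ∑ v ∈ (univ : Finset V),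
          (if v ∈ A then ((∏ _v ∈ A, p) * ∏ _v ∈ univ \ A, (1 - p)) else 0) := by
        refine sum_congr rfl fun A _ => ?_
        rw [h A, mul_sum]
        exact sum_congr rfl fun v _ => by split <;> ring
    _ = ∑ v ∈ (univ : Finset V), ∑ A ∈ (univ : Finset V).powerset,
          (if v ∈ A then ((∏ _v ∈ A, p) * ∏ _v ∈ univ \ A, (1 - p)) else 0) := sum_comm
    _ = ∑ v ∈ (univ : Finset V), p := by
        refine sum_congr rfl fun v _ => ?_
        rw [← sum_filter]
        have hset : (univ : Finset V).powerset.filter (fun A => v ∈ A)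
            = (univ : Finset V).powerset.filter (fun A => ({v} : Finset V) ⊆ A) := by
          ext A; simp [singleton_subset_iff]
        rw [hset]
        simpa using prob_sum p ({v} : Finset V)
    _ = (Fintype.card V : ℝ) * p := by simp [mul_comm]

lemma edge_exp {V : Type*} [DecidableEq V] [Fintype V] (p : ℝ) (E : Finset (Finset V)) :
    ∑ A ∈ (univ : Finset V).powerset,
      ((∏ _v ∈ A, p) * ∏ _v ∈ univ \ A, (1 - p)) * ((E.filter (· ⊆ A)).card : ℝ)
      = ∑ e ∈ E, p ^ e.card := by
  have h : ∀ A : Finset V, ((E.filter (· ⊆ A)).card : ℝ) = ∑ e ∈ E, if e ⊆ A then (1:ℝ) else 0 := by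
    intro A
    rw [sum_ite, sum_const, sum_const]
    simp
  calc ∑ A ∈ (univ : Finset V).powerset,
      ((∏ _v ∈ A, p) * ∏ _v ∈ univ \ A, (1 - p)) * ((E.filter (· ⊆ A)).card : ℝ)
      = ∑ A ∈ (univ : Finset V).powerset, ∑ e ∈ E,
          (if e ⊆ A then ((∏ _v ∈ A, p) * ∏ _v ∈ univ \ A, (1 - p)) else 0) := by
        refine sum_congr rfl fun A _ => ?_
        rw [h A, mul_sum]
        exact sum_congr rfl fun e _ => by split <;> ring
    _ = ∑ e ∈ E, ∑ A ∈ (univ : Finset V).powerset,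
          (if e ⊆ A then ((∏ _v ∈ A, p) * ∏ _v ∈ univ \ A, (1 - p)) else 0) := sum_comm
    _ = ∑ e ∈ E, p ^ e.card := by
        refine sum_congr rfl fun e _ => ?_
        rw [← sum_filter, ← prob_sum p e]

lemma good_set {V : Type*} [DecidableEq V] [Fintype V] {p : ℝ} (hp0 : 0 < p) (hp1 : p ≤ 1)
    (E : Finset (Finset V)) :
    ∃ A : Finset V, (Fintype.card V : ℝ) * p - ∑ e ∈ E, p ^ e.card
      ≤ (A.card : ℝ) - ((E.filter (· ⊆ A)).card : ℝ) := by
  by_contra hcon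
  push_neg at hcon
  set w : Finset V → ℝ := fun A => (∏ _v ∈ A, p) * ∏ _v ∈ univ \ A, (1 - p) with hw
  set t : ℝ := (Fintype.card V : ℝ) * p - ∑ e ∈ E, p ^ e.card with ht
  have hwnn : ∀ A : Finset V, 0 ≤ w A := fun A =>
    mul_nonneg (prod_nonneg fun _ _ => hp0.le) (prod_nonneg fun _ _ => by linarith)
  have hwu : 0 < w (univ : Finset V) := by
    simp only [hw, sdiff_self]
    rw [prod_const, prod_const]
    simp [pow_pos hp0]
  have hlt : ∑ A ∈ (univ : Finset V).powerset,
      w A * ((A.card : ℝ) - ((E.filter (· ⊆ A)).card : ℝ))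
      < ∑ A ∈ (univ : Finset V).powerset, w A * t := by
    refine sum_lt_sum (fun A _ => mul_le_mul_of_nonneg_left (hcon A).le (hwnn A)) ?_
    exact ⟨univ, mem_powerset_self _, by
      exact mul_lt_mul_of_pos_left (hcon univ) hwu⟩
  have heq : ∑ A ∈ (univ : Finset V).powerset,
      w A * ((A.card : ℝ) - ((E.filter (· ⊆ A)).card : ℝ)) = t := by
    simp only [mul_sub]
    rw [sum_sub_distrib, card_exp, edge_exp]
  have heq2 : ∑ A ∈ (univ : Finset V).powerset, w A * t = t := by
    rw [← sum_mul, total_one, one_mul]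
  rw [heq, heq2] at hlt
  exact lt_irrefl _ hlt

lemma deletion {V : Type*} [DecidableEq V] [Fintype V] [Nonempty V]
    (E : Finset (Finset V)) (hne : ∀ e ∈ E, e.Nonempty) (A : Finset V) :
    ∃ S : Finset V, (∀ e ∈ E, ¬ e ⊆ S) ∧
      (A.card : ℝ) - ((E.filter (· ⊆ A)).card : ℝ) ≤ (S.card : ℝ) := by
  classical
  have v0 : V := Classical.arbitrary V
  set pick : Finset V → V := fun e => if h : e.Nonempty then h.choose else v0 with hpick
  have hpickmem : ∀ e : Finset V, e.Nonempty → pick e ∈ e := by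
    intro e he
    simp only [hpick, dif_pos he]
    exact he.choose_spec
  set D : Finset V := (E.filter (· ⊆ A)).image pick with hD
  have hDA : D ⊆ A := by
    intro x hx
    simp only [hD, mem_image, mem_filter] at hx
    obtain ⟨e, ⟨heE, heA⟩, rfl⟩ := hx
    exact heA (hpickmem e (hne e heE))
  refine ⟨A \ D, ?_, ?_⟩
  · intro e heE hsub
    have heA : e ⊆ A := hsub.trans sdiff_subset
    have : pick e ∈ D := mem_image_of_mem pick (mem_filter.mpr ⟨heE, heA⟩)
    have : pick e ∈ A \ D := hsub (hpickmem e (hne e heE))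
    simp only [mem_sdiff] at this
    exact this.2 (mem_image_of_mem pick (mem_filter.mpr ⟨heE, heA⟩))
  · rw [card_sdiff_of_subset hDA]
    have h1 : D.card ≤ A.card := card_le_card hDA
    have h2 : (D.card : ℝ) ≤ ((E.filter (· ⊆ A)).card : ℝ) := by
      exact_mod_cast card_image_le
    push_cast [h1]
    linarith

/-- Spencer's bound on the independence number. -/
theorem spencer_independent_set {V : Type*} [DecidableEq V] [Fintype V]
    (ℓ : ℕ) (hℓ : 2 ≤ ℓ)
    (E : Finset (Finset V)) (hunif : ∀ e ∈ E, e.card = ℓ) :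
    ∃ S : Finset V, (∀ e ∈ E, ¬ e ⊆ S) ∧
      ((ℓ : ℝ) - 1) / ℓ * (Fintype.card V) *
        min 1 (((ℓ : ℝ) * E.card / Fintype.card V) ^ (-(1 : ℝ) / ((ℓ : ℝ) - 1)))
      ≤ S.card := by
  classical
  have hl2 : (2:ℝ) ≤ (ℓ:ℝ) := by exact_mod_cast hℓ
  have hl1 : (0:ℝ) < (ℓ:ℝ) - 1 := by linarith
  have hlpos : (0:ℝ) < (ℓ:ℝ) := by linarith
  rcases Nat.eq_zero_or_pos (Fintype.card V) with hn | hn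
  · -- empty vertex set
    refine ⟨∅, ?_, ?_⟩
    · intro e heE
      have : e.card = ℓ := hunif e heE
      have hcard : e.card ≤ Fintype.card V := Finset.card_le_univ e
      omega
    · rw [hn]
      simp
  · have : Nonempty V := Fintype.card_pos_iff.mp hn
    have hnpos : (0:ℝ) < (Fintype.card V : ℝ) := by exact_mod_cast hn
    rcases E.eq_empty_or_nonempty with hE | hE
    · refine ⟨univ, by simp [hE], ?_⟩
      subst hE
      have hz : ((ℓ : ℝ) * (#(∅ : Finset (Finset V)) : ℝ) / Fintype.card V) = 0 := by simp
      rw [hz, Real.zero_rpow (ne_of_lt (div_neg_of_neg_of_pos (by norm_num) hl1))]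
      simp
    · set n : ℝ := (Fintype.card V : ℝ)
      set d : ℝ := (ℓ : ℝ) * E.card / n with hd_def
      have hEpos : (0:ℝ) < E.card := by
        exact_mod_cast card_pos.mpr hE
      have hd : 0 < d := by positivity
      set q : ℝ := d ^ (-(1 : ℝ) / ((ℓ : ℝ) - 1)) with hq_def
      set p : ℝ := min 1 q with hp_def
      have hqpos : 0 < q := Real.rpow_pos_of_pos hd _
      have hp0 : 0 < p := lt_min one_pos hqpos
      have hp1 : p ≤ 1 := min_le_left _ _
      obtain ⟨A, hA⟩ := good_set hp0 hp1 E
      obtain ⟨S, hSind, hScard⟩ := deletion E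
        (fun e he => card_pos.mp (by rw [hunif e he]; omega)) A
      refine ⟨S, hSind, ?_⟩
      have hsum : ∑ e ∈ E, p ^ e.card = (E.card : ℝ) * p ^ ℓ := by
        rw [sum_congr rfl fun e he => by rw [hunif e he]]
        rw [sum_const, nsmul_eq_mul]
      rw [hsum] at hA
      -- key: q ^ (ℓ-1) = d⁻¹
      have hql : q ^ (ℓ - 1) = d⁻¹ := by
        rw [hq_def, ← Real.rpow_natCast (d ^ _) (ℓ - 1), ← Real.rpow_mul hd.le]
        have hc : ((ℓ - 1 : ℕ) : ℝ) = (ℓ:ℝ) - 1 := by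
          push_cast [Nat.cast_sub (by omega : 1 ≤ ℓ)]; ring
        rw [hc, div_mul_cancel₀ _ (ne_of_gt hl1), Real.rpow_neg_one]
      have hpl : p ^ (ℓ - 1) ≤ d⁻¹ := by
        rw [← hql]
        exact pow_le_pow_left₀ hp0.le (min_le_right _ _) _
      have hkey : (E.card : ℝ) * p ^ ℓ ≤ n / ℓ * p := by
        have h1 : (E.card : ℝ) * p ^ (ℓ - 1) ≤ n / ℓ := by
          have := mul_le_mul_of_nonneg_left hpl hEpos.le
          have hdi : (E.card : ℝ) * d⁻¹ = n / ℓ := by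
            rw [hd_def]
            field_simp
          linarith [hdi ▸ this]
        have : p ^ ℓ = p ^ (ℓ - 1) * p := by
          rw [← pow_succ]
          congr 1
          omega
        rw [this, ← mul_assoc]
        exact mul_le_mul_of_nonneg_right h1 hp0.le
      have hfinal : ((ℓ : ℝ) - 1) / ℓ * n * p ≤ n * p - (E.card : ℝ) * p ^ ℓ := by
        have : ((ℓ : ℝ) - 1) / ℓ * n * p = n * p - n / ℓ * p := by
          field_simp
        linarith
      calc ((ℓ : ℝ) - 1) / ℓ * n * p ≤ n * p - (E.card : ℝ) * p ^ ℓ := hfinal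
        _ ≤ (A.card : ℝ) - ((E.filter (· ⊆ A)).card : ℝ) := hA
        _ ≤ (S.card : ℝ) := hScard
end
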